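/- arXiv:2010.09576 — 4 statements merged into one kernel-verified Lean document; each statement's English description precedes it below -/
import Mathlib

section
/- In the Gaussian mixture model, there is an absolute constant C₁ > 0 such that for every β with ‖β − β*‖₂ ≤ (1/4)‖β*‖₂ and ‖β‖₀ ≤ s, and every coordinate j ∈ [d], the random variable (2w_β(Y) − 1)·Y_j − β_j is ξ-sub-exponential with ξ = C₁·√(‖β*‖_∞² + σ²). -/
open MeasureTheory ProbabilityTheory Real
open scoped ENNReal NNReal

noncomputable section

/-- Euclidean (ℓ²) norm of a vector in `Fin d → ℝ`. -/
def l2 {d : ℕ} (v : Fin d → ℝ) : ℝ := Real.sqrt (∑ j, v j ^ 2)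

/-- Supremum (ℓ∞) norm. -/
def linf {d : ℕ} (v : Fin d → ℝ) : ℝ := ⨆ j, |v j|

/-- Number of nonzero entries (ℓ₀ "norm"). -/
def l0 {d : ℕ} (v : Fin d → ℝ) : ℕ := (Finset.univ.filter fun j => v j ≠ 0).card

/-- Euclidean inner product. -/
def inp {d : ℕ} (u v : Fin d → ℝ) : ℝ := ∑ j, u j * v j

/-- The continuous linear map `v ↦ ⟨g, v⟩`; used to express gradients. -/
def dotCLM {d : ℕ} (g : Fin d → ℝ) : (Fin d → ℝ) →L[ℝ] ℝ :=
  ∑ j, g j • (ContinuousLinearMap.proj j)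

/-- `X` is `ξ`-sub-exponential under `μ`: `E[exp (t (X - E X))] ≤ exp (ξ² t² / 2)` for `|t| < 1/ξ`. -/
def SubExpOn {α : Type*} [MeasurableSpace α] (μ : Measure α) (ξ : ℝ) (X : α → ℝ) : Prop :=
  ∀ t : ℝ, |t| < 1 / ξ →
    ∫ a, Real.exp (t * (X a - ∫ a', X a' ∂μ)) ∂μ ≤ Real.exp (ξ ^ 2 * t ^ 2 / 2)

/-- `‖X‖_{ψ₂} = sup_{p ≥ 1} p^{-1/2} (E |X|^p)^{1/p} ≤ c`, stated pointwise in `p`. -/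
def Psi2NormLe {α : Type*} [MeasurableSpace α] (μ : Measure α) (X : α → ℝ) (c : ℝ) : Prop :=
  ∀ p : ℝ, 1 ≤ p → p ^ (-(1 : ℝ) / 2) * (∫ a, |X a| ^ p ∂μ) ^ p⁻¹ ≤ c

/-- `‖X‖_{ψ₁} = sup_{p ≥ 1} p^{-1} (E |X|^p)^{1/p} ≤ c`, stated pointwise in `p`. -/
def Psi1NormLe {α : Type*} [MeasurableSpace α] (μ : Measure α) (X : α → ℝ) (c : ℝ) : Prop :=
  ∀ p : ℝ, 1 ≤ p → p ^ (-(1 : ℝ)) * (∫ a, |X a| ^ p ∂μ) ^ p⁻¹ ≤ c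

/-- `S` is a set of `s` indices attaining the `s` largest values of `|v j|`. -/
def IsTopIdx {d : ℕ} (v : Fin d → ℝ) (s : ℕ) (S : Finset (Fin d)) : Prop :=
  S.card = s ∧ ∀ i ∈ S, ∀ j ∉ S, |v j| ≤ |v i|

/-- Truncation of `v` to a set of coordinates `S`. -/
def trunc {d : ℕ} (v : Fin d → ℝ) (S : Finset (Fin d)) : Fin d → ℝ :=
  fun j => if j ∈ S then v j else 0

/-- A canonical set of indices of the `s` largest values of `|v j|`. -/
def suppTop {d : ℕ} (v : Fin d → ℝ) (s : ℕ) : Finset (Fin d) :=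
  (Finset.univ.filter fun i : Fin d => d - s ≤ (i : ℕ)).image (Tuple.sort fun j => |v j|)

/-- The `α`-trimmed mean: remove the `⌈α n⌉` largest and smallest values, average the rest. -/
def trmean {n : ℕ} (a : ℝ) (z : Fin n → ℝ) : ℝ :=
  (∑ i : Fin n,
      if ⌈a * n⌉₊ ≤ (i : ℕ) ∧ (i : ℕ) < n - ⌈a * n⌉₊ then z (Tuple.sort z i) else 0) /
    ((n : ℝ) - 2 * ⌈a * n⌉₊)

/-- Coordinatewise `α`-trimmed mean of vector samples. -/
def dTrim {n d : ℕ} (a : ℝ) (z : Fin n → Fin d → ℝ) : Fin d → ℝ :=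
  fun j => trmean a (fun i => z i j)

/-- Iterates of the trimmed gradient EM algorithm with sample-gradient map `g`,
corrupted samples `z`, trimming level `a`, step size `η` and sparsity level `s`. -/
def temIter {n d : ℕ} {E : Type*} (g : (Fin d → ℝ) → E → Fin d → ℝ)
    (z : Fin n → E) (a η : ℝ) (s : ℕ) (βinit : Fin d → ℝ) : ℕ → Fin d → ℝ
  | 0 => trunc βinit (suppTop βinit s)
  | (t + 1) =>
      let βc := temIter g z a η s βinit t
      let βh := βc + η • dTrim a (fun i => g βc (z i))
      trunc βh (suppTop βh s)

open Classical in
/-- Number of indices where the corrupted samples differ from the clean ones. -/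
def numDiff {n : ℕ} {E : Type*} (y z : Fin n → E) : ℕ :=
  (Finset.univ.filter fun i => z i ≠ y i).card

/-- Rademacher law on `ℝ`. -/
def rademacherLaw : Measure ℝ :=
  (1 / 2 : ℝ≥0∞) • Measure.dirac 1 + (1 / 2 : ℝ≥0∞) • Measure.dirac (-1)

/-- Law of `N(0, σ² I_d)` on `Fin d → ℝ`. -/
def gaussPi (d : ℕ) (σ : ℝ) : Measure (Fin d → ℝ) :=
  Measure.pi fun _ => gaussianReal 0 (Real.toNNReal (σ ^ 2))

/-- Law of `Y = Z β* + V` for the Gaussian mixture model. -/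
def gmmLaw {d : ℕ} (βs : Fin d → ℝ) (σ : ℝ) : Measure (Fin d → ℝ) :=
  (1 / 2 : ℝ≥0∞) • (gaussPi d σ).map (fun v => βs + v) +
    (1 / 2 : ℝ≥0∞) • (gaussPi d σ).map (fun v => -βs + v)

/-- GMM weight function `w_β`. -/
def wGMM {d : ℕ} (σ : ℝ) (β y : Fin d → ℝ) : ℝ :=
  1 / (1 + Real.exp (-(inp β y) / σ ^ 2))

/-- GMM sample gradient `∇q(β;β)(y) = (2 w_β(y) - 1) y - β`. -/
def gradGMM {d : ℕ} (σ : ℝ) (β : Fin d → ℝ) (y : Fin d → ℝ) : Fin d → ℝ :=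
  (2 * wGMM σ β y - 1) • y - β

/-- Joint law of `(X, Y)` in the mixture of regressions model. -/
def mrLaw {d : ℕ} (βs : Fin d → ℝ) (σ : ℝ) : Measure ((Fin d → ℝ) × ℝ) :=
  ((gaussPi d 1).prod ((gaussianReal 0 (Real.toNNReal (σ ^ 2))).prod rademacherLaw)).map
    (fun p => (p.1, p.2.2 * inp βs p.1 + p.2.1))

/-- MRM weight function `w_β(x,y)`. -/
def wMRM {d : ℕ} (σ : ℝ) (β x : Fin d → ℝ) (y : ℝ) : ℝ :=
  1 / (1 + Real.exp (-(y * inp β x) / σ ^ 2))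

/-- MRM sample gradient `∇q(β;β)(x,y) = (2 w_β(x,y) - 1) y x - x xᵀ β`. -/
def gradMRM {d : ℕ} (σ : ℝ) (β : Fin d → ℝ) (p : (Fin d → ℝ) × ℝ) : Fin d → ℝ :=
  ((2 * wMRM σ β p.1 p.2 - 1) * p.2) • p.1 - inp p.1 β • p.1

/-- Bernoulli({1,0}) law on ℝ with `P(1) = 1 - pm`, `P(0) = pm` (missingness mask coordinate). -/
def bern01 (pm : ℝ) : Measure ℝ :=
  ENNReal.ofReal (1 - pm) • Measure.dirac 1 + ENNReal.ofReal pm • Measure.dirac 0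

/-- Joint law of `(X, Y, Z)` in linear regression with covariates missing with probability `pm`. -/
def rmcLaw {d : ℕ} (βs : Fin d → ℝ) (σ pm : ℝ) :
    Measure ((Fin d → ℝ) × ℝ × (Fin d → ℝ)) :=
  ((gaussPi d 1).prod ((gaussianReal 0 (Real.toNNReal (σ ^ 2))).prod
      (Measure.pi fun _ : Fin d => bern01 pm))).map
    (fun p => (p.1, inp βs p.1 + p.2.1, p.2.2))

/-- The vector `m_β(x^obs, y)` (written with mask `z` and full covariate `x`). -/
def mFun {d : ℕ} (σ : ℝ) (β x : Fin d → ℝ) (y : ℝ) (z : Fin d → ℝ) : Fin d → ℝ :=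
  (z * x) + ((y - inp β (z * x)) / (σ ^ 2 + l2 ((1 - z) * β) ^ 2)) • ((1 - z) * β)

/-- `K_β(x^obs, y)` applied to a vector `w`. -/
def Kapply {d : ℕ} (σ : ℝ) (β x : Fin d → ℝ) (y : ℝ) (z : Fin d → ℝ)
    (w : Fin d → ℝ) : Fin d → ℝ :=
  ((1 - z) * w) + inp (mFun σ β x y z) w • mFun σ β x y z -
    inp ((1 - z) * mFun σ β x y z) w • ((1 - z) * mFun σ β x y z)

/-- RMC sample gradient `∇q(β;β) = y m_β - K_β β`. -/
def gradRMC {d : ℕ} (σ : ℝ) (β : Fin d → ℝ)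
    (p : (Fin d → ℝ) × ℝ × (Fin d → ℝ)) : Fin d → ℝ :=
  p.2.1 • mFun σ β p.1 p.2.1 p.2.2 - Kapply σ β p.1 p.2.1 p.2.2 β

end

noncomputable section

/-- GMM population map `G(β) = E[(2 w_β(Y) - 1) Y]`. -/
def gmmG {d : ℕ} (σ : ℝ) (βs β : Fin d → ℝ) : Fin d → ℝ :=
  fun j => ∫ y, (2 * wGMM σ β y - 1) * y j ∂(gmmLaw βs σ)

/-- GMM population `Q(β; b) = ⟨G(b), β⟩ - (1/2)‖β‖₂²`. -/
def gmmQ {d : ℕ} (σ : ℝ) (βs β b : Fin d → ℝ) : ℝ :=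
  inp (gmmG σ βs b) β - 1 / 2 * l2 β ^ 2

/-- MRM population map `G(β) = E[(2 w_β(X,Y) - 1) Y X]`. -/
def mrG {d : ℕ} (σ : ℝ) (βs β : Fin d → ℝ) : Fin d → ℝ :=
  fun j => ∫ p, (2 * wMRM σ β p.1 p.2 - 1) * p.2 * p.1 j ∂(mrLaw βs σ)

/-- MRM population `Q(β; b) = ⟨G(b), β⟩ - (1/2)‖β‖₂²`. -/
def mrQ {d : ℕ} (σ : ℝ) (βs β b : Fin d → ℝ) : ℝ :=
  inp (mrG σ βs b) β - 1 / 2 * l2 β ^ 2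

/-- RMC population `Q(β; b) = E[Y ⟨m_b, β⟩ - (1/2) βᵀ K_b β]`. -/
def rmcQ {d : ℕ} (σ pm : ℝ) (βs β b : Fin d → ℝ) : ℝ :=
  ∫ p, (p.2.1 * inp (mFun σ b p.1 p.2.1 p.2.2) β -
    1 / 2 * inp β (Kapply σ b p.1 p.2.1 p.2.2 β)) ∂(rmcLaw βs σ pm)

/-- RMC population gradient `∇₁Q(β; b) = E[Y m_b - K_b β]`. -/
def rmcGrad1 {d : ℕ} (σ pm : ℝ) (βs β b : Fin d → ℝ) : Fin d → ℝ :=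
  fun j => ∫ p, (p.2.1 • mFun σ b p.1 p.2.1 p.2.2 -
    Kapply σ b p.1 p.2.1 p.2.2 β) j ∂(rmcLaw βs σ pm)

end

section Helpers

open MeasureTheory ProbabilityTheory Real

private lemma exp_le_quad (x : ℝ) : Real.exp x ≤ 1 + x + x ^ 2 * Real.exp |x| := by
  rcases le_or_gt 0 x with hx | hx
  · rw [abs_of_nonneg hx]
    rcases le_or_gt 1 x with h1 | h1
    · nlinarith [Real.exp_pos x, mul_nonneg (mul_nonneg (by linarith : (0:ℝ) ≤ x - 1)
        (by linarith : (0:ℝ) ≤ x + 1)) (Real.exp_pos x).le]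
    · have h3 : Real.exp x * Real.exp (-x) = 1 := by rw [← Real.exp_add]; simp
      have key : Real.exp x * (1 - x) ≤ 1 := by
        nlinarith [Real.add_one_le_exp (-x), Real.exp_pos x]
      nlinarith [Real.exp_pos x]
  · rw [abs_of_neg hx]
    have h3 : Real.exp x * Real.exp (-x) = 1 := by rw [← Real.exp_add]; simp
    have key : Real.exp x * (1 - x) ≤ 1 := by
      nlinarith [Real.add_one_le_exp (-x), Real.exp_pos x]
    have h4 : Real.exp x ≤ 1 + x + x ^ 2 := by nlinarith [Real.exp_pos x]
    have h5 : (1 : ℝ) ≤ Real.exp (-x) := Real.one_le_exp (by linarith)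
    nlinarith [sq_nonneg x]

private lemma sq_le_four_exp {x : ℝ} (hx : 0 ≤ x) : x ^ 2 ≤ 4 * Real.exp x := by
  have h1 : x / 2 ≤ Real.exp (x / 2) := by nlinarith [Real.add_one_le_exp (x / 2)]
  have h2 : Real.exp (x / 2) * Real.exp (x / 2) = Real.exp x := by
    rw [← Real.exp_add]; ring_nf
  nlinarith [Real.exp_pos (x / 2)]

private lemma exp_half_le_two : Real.exp ((1 : ℝ) / 2) ≤ 2 := by
  have h3 : Real.exp ((1:ℝ)/2) * Real.exp (-(1/2 : ℝ)) = 1 := by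
    rw [← Real.exp_add]; norm_num
  nlinarith [Real.add_one_le_exp (-(1/2 : ℝ)), Real.exp_pos ((1:ℝ)/2)]

private lemma exp_one_le_three : Real.exp (1 : ℝ) ≤ 3 := by
  nlinarith [Real.exp_one_lt_d9.le]

private lemma gauss_exp_mul {σ : ℝ} (hσ : 0 < σ) (c : ℝ) :
    Integrable (fun x => Real.exp (c * x)) (gaussianReal 0 (Real.toNNReal (σ ^ 2))) ∧
    ∫ x, Real.exp (c * x) ∂(gaussianReal 0 (Real.toNNReal (σ ^ 2)))
      = Real.exp (σ ^ 2 * c ^ 2 / 2) := by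
  set v : ℝ≥0 := Real.toNNReal (σ ^ 2) with hv
  have hσ2 : (0:ℝ) < σ ^ 2 := by positivity
  have hv0 : v ≠ 0 := by
    simp only [hv, ne_eq, Real.toNNReal_eq_zero, not_le]
    exact hσ2
  have hvr : (v : ℝ) = σ ^ 2 := Real.coe_toNNReal _ hσ2.le
  have hNd : gaussianReal 0 v = volume.withDensity (gaussianPDF 0 v) :=
    gaussianReal_of_var_ne_zero 0 hv0
  have hkey : ∀ x : ℝ, gaussianPDFReal 0 v x * Real.exp (c * x)
      = Real.exp (σ ^ 2 * c ^ 2 / 2) * gaussianPDFReal (σ ^ 2 * c) v x := by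
    intro x
    simp only [gaussianPDFReal]
    set A := (Real.sqrt (2 * π * (v : ℝ)))⁻¹ with hA
    rw [hvr]
    have e : Real.exp (-(x - 0) ^ 2 / (2 * σ ^ 2)) * Real.exp (c * x)
        = Real.exp (σ ^ 2 * c ^ 2 / 2) * Real.exp (-(x - σ ^ 2 * c) ^ 2 / (2 * σ ^ 2)) := by
      rw [← Real.exp_add, ← Real.exp_add]
      congr 1
      field_simp
      ring
    linear_combination A * e
  constructor
  · rw [hNd, integrable_withDensity_iff (measurable_gaussianPDF 0 v)
      (ae_of_all _ fun x => by simp [gaussianPDF, ENNReal.ofReal_lt_top])]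
    have heq : (fun x => Real.exp (c * x) * (gaussianPDF 0 v x).toReal)
        = fun x => Real.exp (σ ^ 2 * c ^ 2 / 2) * gaussianPDFReal (σ ^ 2 * c) v x := by
      funext x
      rw [gaussianPDF, ENNReal.toReal_ofReal (gaussianPDFReal_nonneg 0 v x), mul_comm, hkey]
    rw [heq]
    exact (integrable_gaussianPDFReal (σ ^ 2 * c) v).const_mul _
  · rw [hNd]
    have hpdf : gaussianPDF 0 v = fun x => ((Real.toNNReal (gaussianPDFReal 0 v x)) : ℝ≥0∞) := rfl
    rw [hpdf, integral_withDensity_eq_integral_smul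
      (f := fun x => Real.toNNReal (gaussianPDFReal 0 v x))
      (measurable_real_toNNReal.comp (measurable_gaussianPDFReal 0 v)) _]
    have heq : (fun x => Real.toNNReal (gaussianPDFReal 0 v x) • Real.exp (c * x))
        = fun x => Real.exp (σ ^ 2 * c ^ 2 / 2) * gaussianPDFReal (σ ^ 2 * c) v x := by
      funext x
      rw [NNReal.smul_def, smul_eq_mul, Real.coe_toNNReal _ (gaussianPDFReal_nonneg 0 v x),
        hkey x]
    rw [heq, integral_const_mul, integral_gaussianPDFReal_eq_one _ hv0, mul_one]

private lemma gauss_exp_abs {σ : ℝ} (hσ : 0 < σ) {c : ℝ} (hc : 0 ≤ c) :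
    Integrable (fun x => Real.exp (c * |x|)) (gaussianReal 0 (Real.toNNReal (σ ^ 2))) ∧
    ∫ x, Real.exp (c * |x|) ∂(gaussianReal 0 (Real.toNNReal (σ ^ 2)))
      ≤ 2 * Real.exp (σ ^ 2 * c ^ 2 / 2) := by
  obtain ⟨h1i, h1v⟩ := gauss_exp_mul hσ c
  obtain ⟨h2i, h2v⟩ := gauss_exp_mul hσ (-c)
  have hb : ∀ x : ℝ, Real.exp (c * |x|) ≤ Real.exp (c * x) + Real.exp (-c * x) := by
    intro x
    rcases abs_cases x with ⟨h, _⟩ | ⟨h, _⟩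
    · rw [h]
      nlinarith [Real.exp_pos (-c * x)]
    · rw [h]
      have : c * -x = -c * x := by ring
      rw [this]
      nlinarith [Real.exp_pos (c * x)]
  have hint : Integrable (fun x => Real.exp (c * x) + Real.exp (-c * x))
      (gaussianReal 0 (Real.toNNReal (σ ^ 2))) := h1i.add h2i
  constructor
  · refine hint.mono' ?_ (ae_of_all _ fun x => ?_)
    · exact (Real.continuous_exp.comp (continuous_const.mul continuous_abs)).aestronglyMeasurable
    · rw [Real.norm_eq_abs, abs_of_nonneg (Real.exp_pos _).le]
      exact hb x
  · calc ∫ x, Real.exp (c * |x|) ∂(gaussianReal 0 (Real.toNNReal (σ ^ 2)))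
        ≤ ∫ x, (Real.exp (c * x) + Real.exp (-c * x)) ∂(gaussianReal 0 (Real.toNNReal (σ ^ 2))) := by
          refine integral_mono_of_nonneg (ae_of_all _ fun x => (Real.exp_pos _).le) hint
            (ae_of_all _ hb)
      _ = Real.exp (σ ^ 2 * c ^ 2 / 2) + Real.exp (σ ^ 2 * (-c) ^ 2 / 2) := by
          rw [integral_add h1i h2i, h1v, h2v]
      _ = 2 * Real.exp (σ ^ 2 * c ^ 2 / 2) := by rw [neg_sq]; ring

private lemma gauss_abs {σ : ℝ} (hσ : 0 < σ) :
    Integrable (fun x : ℝ => |x|) (gaussianReal 0 (Real.toNNReal (σ ^ 2))) ∧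
    ∫ x, |x| ∂(gaussianReal 0 (Real.toNNReal (σ ^ 2))) ≤ 4 * σ := by
  have hc : (0:ℝ) ≤ 1 / σ := by positivity
  obtain ⟨hi, hv⟩ := gauss_exp_abs hσ hc
  have hb : ∀ x : ℝ, |x| ≤ σ * Real.exp ((1 / σ) * |x|) := by
    intro x
    have h1 := Real.add_one_le_exp ((1 / σ) * |x|)
    have hinv : σ * (1 / σ) = 1 := by field_simp
    nlinarith [abs_nonneg x, Real.exp_pos ((1 / σ) * |x|)]
  constructor
  · refine (hi.const_mul σ).mono' continuous_abs.aestronglyMeasurable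
      (ae_of_all _ fun x => ?_)
    rw [Real.norm_eq_abs, abs_abs]
    exact hb x
  · calc ∫ x, |x| ∂(gaussianReal 0 (Real.toNNReal (σ ^ 2)))
        ≤ ∫ x, σ * Real.exp ((1 / σ) * |x|) ∂(gaussianReal 0 (Real.toNNReal (σ ^ 2))) :=
          integral_mono_of_nonneg (ae_of_all _ fun x => abs_nonneg x) (hi.const_mul σ)
            (ae_of_all _ hb)
      _ = σ * ∫ x, Real.exp ((1 / σ) * |x|) ∂(gaussianReal 0 (Real.toNNReal (σ ^ 2))) :=
          integral_const_mul _ _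
      _ ≤ σ * (2 * Real.exp (σ ^ 2 * (1 / σ) ^ 2 / 2)) := by
          exact mul_le_mul_of_nonneg_left hv hσ.le
      _ ≤ 4 * σ := by
          have : σ ^ 2 * (1 / σ) ^ 2 / 2 = 1 / 2 := by field_simp
          rw [this]
          nlinarith [exp_half_le_two, Real.exp_pos ((1:ℝ)/2)]

private lemma pi_map_eval {d : ℕ} (μ : Fin d → Measure ℝ) [∀ i, IsProbabilityMeasure (μ i)]
    (j : Fin d) : (Measure.pi μ).map (Function.eval j) = μ j := by
  ext s hs
  rw [Measure.map_apply (measurable_pi_apply j) hs, Set.eval_preimage, Measure.pi_pi]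
  rw [Finset.prod_eq_single j (fun i _ hij => by
    rw [Function.update_of_ne hij]; exact measure_univ) (fun h => absurd (Finset.mem_univ j) h)]
  rw [Function.update_self]

private lemma pi_int {d : ℕ} (σ : ℝ) (j : Fin d) {g : ℝ → ℝ} (hg : Continuous g) :
    (Integrable (fun v : Fin d → ℝ => g (v j)) (gaussPi d σ)
      ↔ Integrable g (gaussianReal 0 (Real.toNNReal (σ ^ 2)))) ∧
    ∫ v, g (v j) ∂(gaussPi d σ) = ∫ x, g x ∂(gaussianReal 0 (Real.toNNReal (σ ^ 2))) := by
  have hmap : (gaussPi d σ).map (Function.eval j) = gaussianReal 0 (Real.toNNReal (σ ^ 2)) :=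
    pi_map_eval _ j
  constructor
  · rw [← hmap]
    exact (integrable_map_measure hg.aestronglyMeasurable
      (measurable_pi_apply j).aemeasurable).symm
  · rw [← hmap, integral_map (measurable_pi_apply j).aemeasurable hg.aestronglyMeasurable]

private lemma gaussPi_prob (d : ℕ) (σ : ℝ) : IsProbabilityMeasure (gaussPi d σ) := by
  unfold gaussPi; infer_instance

private lemma gmm_prob {d : ℕ} (βs : Fin d → ℝ) (σ : ℝ) :
    IsProbabilityMeasure (gmmLaw βs σ) := by
  haveI := gaussPi_prob d σ
  have h1 : IsProbabilityMeasure ((gaussPi d σ).map (fun v => βs + v)) :=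
    Measure.isProbabilityMeasure_map (continuous_const.add continuous_id).measurable.aemeasurable
  have h2 : IsProbabilityMeasure ((gaussPi d σ).map (fun v => -βs + v)) :=
    Measure.isProbabilityMeasure_map (continuous_const.add continuous_id).measurable.aemeasurable
  constructor
  simp only [gmmLaw, Measure.add_apply, Measure.smul_apply, measure_univ, smul_eq_mul,
    mul_one]
  exact ENNReal.add_halves 1

private lemma gmm_integral {d : ℕ} (βs : Fin d → ℝ) (σ : ℝ) {f : (Fin d → ℝ) → ℝ}
    (hf : Continuous f)
    (h1 : Integrable (fun v => f (βs + v)) (gaussPi d σ))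
    (h2 : Integrable (fun v => f (-βs + v)) (gaussPi d σ)) :
    Integrable f (gmmLaw βs σ) ∧
    ∫ y, f y ∂(gmmLaw βs σ)
      = 2⁻¹ * ∫ v, f (βs + v) ∂(gaussPi d σ) + 2⁻¹ * ∫ v, f (-βs + v) ∂(gaussPi d σ) := by
  have hm1 : Measurable (fun v : Fin d → ℝ => βs + v) :=
    (continuous_const.add continuous_id).measurable
  have hm2 : Measurable (fun v : Fin d → ℝ => -βs + v) :=
    (continuous_const.add continuous_id).measurable
  have hi1 : Integrable f ((gaussPi d σ).map (fun v => βs + v)) :=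
    (integrable_map_measure hf.aestronglyMeasurable hm1.aemeasurable).2 h1
  have hi2 : Integrable f ((gaussPi d σ).map (fun v => -βs + v)) :=
    (integrable_map_measure hf.aestronglyMeasurable hm2.aemeasurable).2 h2
  have htop : (1/2 : ℝ≥0∞) ≠ ⊤ := by norm_num
  constructor
  · rw [gmmLaw]
    exact Integrable.add_measure (hi1.smul_measure htop) (hi2.smul_measure htop)
  · rw [gmmLaw, integral_add_measure (hi1.smul_measure htop) (hi2.smul_measure htop),
      integral_smul_measure, integral_smul_measure,
      integral_map hm1.aemeasurable hf.aestronglyMeasurable,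
      integral_map hm2.aemeasurable hf.aestronglyMeasurable]
    norm_num

private lemma gmm_abs {d : ℕ} (βs : Fin d → ℝ) {σ : ℝ} (hσ : 0 < σ) (j : Fin d) :
    Integrable (fun y : Fin d → ℝ => |y j|) (gmmLaw βs σ) ∧
    ∫ y, |y j| ∂(gmmLaw βs σ) ≤ |βs j| + 4 * σ := by
  haveI := gaussPi_prob d σ
  obtain ⟨hNi, hNv⟩ := gauss_abs hσ
  have hPii : Integrable (fun v : Fin d → ℝ => |v j|) (gaussPi d σ) :=
    (pi_int σ j continuous_abs).1.2 hNi
  have hgen : ∀ s : Fin d → ℝ, Integrable (fun v : Fin d → ℝ => |(s + v) j|) (gaussPi d σ) ∧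
      ∫ v, |(s + v) j| ∂(gaussPi d σ) ≤ |s j| + 4 * σ := by
    intro s
    have hb : ∀ v : Fin d → ℝ, |(s + v) j| ≤ |s j| + |v j| := by
      intro v
      rw [Pi.add_apply]
      exact abs_add_le _ _
    have hdom : Integrable (fun v : Fin d → ℝ => |s j| + |v j|) (gaussPi d σ) :=
      (integrable_const _).add hPii
    have hint : Integrable (fun v : Fin d → ℝ => |(s + v) j|) (gaussPi d σ) := by
      refine hdom.mono' ?_ (ae_of_all _ fun v => ?_)
      · exact ((continuous_apply j).comp (continuous_const.add continuous_id)).abs.aestronglyMeasurable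
      · rw [Real.norm_eq_abs, abs_abs]
        exact hb v
    refine ⟨hint, ?_⟩
    calc ∫ v, |(s + v) j| ∂(gaussPi d σ)
        ≤ ∫ v, (|s j| + |v j|) ∂(gaussPi d σ) := integral_mono hint hdom hb
      _ = |s j| + ∫ v, |v j| ∂(gaussPi d σ) := by
          rw [integral_add (integrable_const _) hPii, integral_const, probReal_univ]
          simp
      _ = |s j| + ∫ x, |x| ∂(gaussianReal 0 (Real.toNNReal (σ ^ 2))) := by
          rw [(pi_int σ j continuous_abs).2]
      _ ≤ |s j| + 4 * σ := by linarith
  obtain ⟨h1, h1v⟩ := hgen βs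
  obtain ⟨h2, h2v⟩ := hgen (-βs)
  have hneg : |(-βs) j| = |βs j| := by rw [Pi.neg_apply, abs_neg]
  rw [hneg] at h2v
  obtain ⟨hint, hval⟩ := gmm_integral βs σ (continuous_apply j).abs h1 h2
  refine ⟨hint, ?_⟩
  rw [hval]
  linarith

private lemma gmm_exp_abs {d : ℕ} (βs : Fin d → ℝ) {σ : ℝ} (hσ : 0 < σ) (j : Fin d)
    {c : ℝ} (hc : 0 ≤ c) :
    Integrable (fun y : Fin d → ℝ => Real.exp (c * |y j|)) (gmmLaw βs σ) ∧
    ∫ y, Real.exp (c * |y j|) ∂(gmmLaw βs σ)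
      ≤ Real.exp (c * |βs j|) * (2 * Real.exp (σ ^ 2 * c ^ 2 / 2)) := by
  haveI := gaussPi_prob d σ
  obtain ⟨hNi, hNv⟩ := gauss_exp_abs hσ hc
  have hgc : Continuous fun x : ℝ => Real.exp (c * |x|) :=
    Real.continuous_exp.comp (continuous_const.mul continuous_abs)
  have hPii : Integrable (fun v : Fin d → ℝ => Real.exp (c * |v j|)) (gaussPi d σ) :=
    (pi_int σ j hgc).1.2 hNi
  have hgen : ∀ s : Fin d → ℝ,
      Integrable (fun v : Fin d → ℝ => Real.exp (c * |(s + v) j|)) (gaussPi d σ) ∧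
      ∫ v, Real.exp (c * |(s + v) j|) ∂(gaussPi d σ)
        ≤ Real.exp (c * |s j|) * (2 * Real.exp (σ ^ 2 * c ^ 2 / 2)) := by
    intro s
    have hb : ∀ v : Fin d → ℝ,
        Real.exp (c * |(s + v) j|) ≤ Real.exp (c * |s j|) * Real.exp (c * |v j|) := by
      intro v
      rw [← Real.exp_add]
      apply Real.exp_le_exp.2
      calc c * |(s + v) j| = c * |s j + v j| := by rw [Pi.add_apply]
        _ ≤ c * (|s j| + |v j|) := mul_le_mul_of_nonneg_left (abs_add_le _ _) hc
        _ = c * |s j| + c * |v j| := by ring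
    have hdom : Integrable
        (fun v : Fin d → ℝ => Real.exp (c * |s j|) * Real.exp (c * |v j|)) (gaussPi d σ) :=
      hPii.const_mul _
    have hint : Integrable (fun v : Fin d → ℝ => Real.exp (c * |(s + v) j|)) (gaussPi d σ) := by
      refine hdom.mono' ?_ (ae_of_all _ fun v => ?_)
      · exact (hgc.comp ((continuous_apply j).comp (continuous_const.add continuous_id))).aestronglyMeasurable
      · rw [Real.norm_eq_abs, abs_of_nonneg (Real.exp_pos _).le]
        exact hb v
    refine ⟨hint, ?_⟩
    calc ∫ v, Real.exp (c * |(s + v) j|) ∂(gaussPi d σ)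
        ≤ ∫ v, Real.exp (c * |s j|) * Real.exp (c * |v j|) ∂(gaussPi d σ) :=
          integral_mono hint hdom hb
      _ = Real.exp (c * |s j|) * ∫ v, Real.exp (c * |v j|) ∂(gaussPi d σ) :=
          integral_const_mul _ _
      _ = Real.exp (c * |s j|) * ∫ x, Real.exp (c * |x|) ∂(gaussianReal 0 (Real.toNNReal (σ ^ 2))) := by
          rw [(pi_int σ j hgc).2]
      _ ≤ Real.exp (c * |s j|) * (2 * Real.exp (σ ^ 2 * c ^ 2 / 2)) :=
          mul_le_mul_of_nonneg_left hNv (Real.exp_pos _).le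
  obtain ⟨h1, h1v⟩ := hgen βs
  obtain ⟨h2, h2v⟩ := hgen (-βs)
  have hneg : |(-βs) j| = |βs j| := by rw [Pi.neg_apply, abs_neg]
  rw [hneg] at h2v
  have hcont : Continuous fun y : Fin d → ℝ => Real.exp (c * |y j|) :=
    hgc.comp (continuous_apply j)
  obtain ⟨hint, hval⟩ := gmm_integral βs σ hcont h1 h2
  refine ⟨hint, ?_⟩
  rw [hval]
  linarith

set_option maxHeartbeats 2000000 in
private lemma gmm_main_est {d : ℕ} (σ : ℝ) (βs β : Fin d → ℝ) (hσ : 0 < σ) (j : Fin d)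
    (t : ℝ) (ht : |t| < 1 / (1000 * Real.sqrt (linf βs ^ 2 + σ ^ 2))) :
    ∫ a, Real.exp (t * (((2 * wGMM σ β a - 1) * a j - β j) -
        ∫ a', ((2 * wGMM σ β a' - 1) * a' j - β j) ∂(gmmLaw βs σ))) ∂(gmmLaw βs σ)
      ≤ Real.exp ((1000 * Real.sqrt (linf βs ^ 2 + σ ^ 2)) ^ 2 * t ^ 2 / 2) := by
  haveI := gmm_prob βs σ
  set L := linf βs with hLdef
  set R := Real.sqrt (L ^ 2 + σ ^ 2) with hRdef
  have hMle : |βs j| ≤ L := by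
    rw [hLdef]
    exact le_ciSup (f := fun i => |βs i|) (Set.Finite.bddAbove (Set.finite_range _)) j
  have hL0 : (0:ℝ) ≤ L := (abs_nonneg _).trans hMle
  have hσR : σ ≤ R := by
    rw [hRdef]
    calc σ = Real.sqrt (σ ^ 2) := (Real.sqrt_sq hσ.le).symm
      _ ≤ Real.sqrt (L ^ 2 + σ ^ 2) := Real.sqrt_le_sqrt (by nlinarith)
  have hLR : L ≤ R := by
    rw [hRdef]
    calc L = Real.sqrt (L ^ 2) := (Real.sqrt_sq hL0).symm
      _ ≤ Real.sqrt (L ^ 2 + σ ^ 2) := Real.sqrt_le_sqrt (by nlinarith)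
  have hR0 : (0:ℝ) < R := lt_of_lt_of_le hσ hσR
  have hξ0 : (0:ℝ) < 1000 * R := by positivity
  have ht1 : |t| ≤ 1 / (1000 * R) := ht.le
  -- the function W and its basic bounds
  set W : (Fin d → ℝ) → ℝ := fun y => (2 * wGMM σ β y - 1) * y j with hWdef
  have hinp : Continuous fun y : Fin d → ℝ => inp β y := by
    unfold inp
    exact continuous_finset_sum _ fun i _ => continuous_const.mul (continuous_apply i)
  have hwcont : Continuous fun y : Fin d → ℝ => wGMM σ β y := by
    unfold wGMM
    refine continuous_const.div
      (continuous_const.add (Real.continuous_exp.comp (hinp.neg.div_const (σ ^ 2))))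
      fun y => ?_
    positivity
  have hWcont : Continuous W :=
    ((continuous_const.mul hwcont).sub continuous_const).mul (continuous_apply j)
  have hWle : ∀ y, |W y| ≤ |y j| := by
    intro y
    have hE : (0:ℝ) < Real.exp (-inp β y / σ ^ 2) := Real.exp_pos _
    have h1E : (0:ℝ) < 1 + Real.exp (-inp β y / σ ^ 2) := by linarith
    have hw1 : wGMM σ β y ≤ 1 := by
      rw [wGMM, div_le_one h1E]; linarith
    have hw0 : 0 ≤ wGMM σ β y := by
      rw [wGMM]; positivity
    calc |W y| = |2 * wGMM σ β y - 1| * |y j| := abs_mul _ _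
      _ ≤ 1 * |y j| := by
          apply mul_le_mul_of_nonneg_right _ (abs_nonneg _)
          rw [abs_le]
          constructor <;> nlinarith
      _ = |y j| := one_mul _
  obtain ⟨habsint, habsval⟩ := gmm_abs βs hσ j
  have hWint : Integrable W (gmmLaw βs σ) := by
    refine habsint.mono' hWcont.aestronglyMeasurable (ae_of_all _ fun y => ?_)
    rw [Real.norm_eq_abs]
    exact hWle y
  set c := ∫ y, W y ∂(gmmLaw βs σ) with hcdef
  set κ := |βs j| + 4 * σ with hκdef
  have hκ0 : (0:ℝ) ≤ κ := by
    rw [hκdef]; positivity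
  have hκR : κ ≤ 5 * R := by
    rw [hκdef]; nlinarith
  have hcbound : |c| ≤ κ := by
    rw [hcdef]
    calc |∫ y, W y ∂(gmmLaw βs σ)| ≤ ∫ y, |W y| ∂(gmmLaw βs σ) := by
          have := norm_integral_le_integral_norm (μ := gmmLaw βs σ) W
          simpa [Real.norm_eq_abs] using this
      _ ≤ ∫ y, |y j| ∂(gmmLaw βs σ) := integral_mono hWint.abs habsint hWle
      _ ≤ κ := habsval
  -- rewrite the integrand
  have hXint : ∫ y, (W y - β j) ∂(gmmLaw βs σ) = c - β j := by
    rw [integral_sub hWint (integrable_const _), integral_const, probReal_univ,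
      one_smul, hcdef]
  have hrw : (fun a => Real.exp (t * (((2 * wGMM σ β a - 1) * a j - β j) -
      ∫ a', ((2 * wGMM σ β a' - 1) * a' j - β j) ∂(gmmLaw βs σ))))
      = fun a => Real.exp (t * (W a - c)) := by
    funext a
    congr 1
    rw [show (fun a' => (2 * wGMM σ β a' - 1) * a' j - β j)
        = fun a' => W a' - β j from rfl] at *
    rw [hXint]
    rw [hWdef]
    ring
  rw [hrw]
  -- main estimate
  set U : (Fin d → ℝ) → ℝ := fun y => W y - c with hUdef
  have hUcont : Continuous U := hWcont.sub continuous_const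
  have hUint : Integrable U (gmmLaw βs σ) := hWint.sub (integrable_const c)
  have hUzero : ∫ y, U y ∂(gmmLaw βs σ) = 0 := by
    rw [hUdef]
    rw [integral_sub hWint (integrable_const _), integral_const, probReal_univ,
      one_smul, hcdef]
    ring
  have hUabs : ∀ y, |U y| ≤ |y j| + κ := by
    intro y
    calc |U y| ≤ |W y| + |c| := abs_sub _ _
      _ ≤ |y j| + κ := add_le_add (hWle y) hcbound
  set q : ℝ := 101 / (1000 * R) with hqdef
  have hq0 : (0:ℝ) ≤ q := by positivity
  obtain ⟨hexpint, hexpval⟩ := gmm_exp_abs βs hσ j hq0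
  set D : ℝ := t ^ 2 * (400 * R ^ 2 * Real.exp (101 * κ / (1000 * R))) with hDdef
  have hD0 : (0:ℝ) ≤ D := by positivity
  set Q : (Fin d → ℝ) → ℝ := fun y => (t * U y) ^ 2 * Real.exp |t * U y| with hQdef
  have hQle : ∀ y, Q y ≤ D * Real.exp (q * |y j|) := by
    intro y
    have hu0 : (0:ℝ) ≤ |U y| := abs_nonneg _
    have h1 : (U y) ^ 2 ≤ 400 * R ^ 2 * Real.exp (100 * |U y| / (1000 * R)) := by
      have h2 := sq_le_four_exp (x := 100 * |U y| / (1000 * R)) (by positivity)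
      have h3 : (100 * |U y| / (1000 * R)) ^ 2 * (100 * R ^ 2) = (U y) ^ 2 := by
        rw [div_pow, mul_pow, sq_abs]
        field_simp
        ring
      nlinarith [Real.exp_pos (100 * |U y| / (1000 * R)), sq_nonneg R]
    have h4 : Real.exp |t * U y| ≤ Real.exp (|U y| / (1000 * R)) := by
      apply Real.exp_le_exp.2
      rw [abs_mul]
      calc |t| * |U y| ≤ (1 / (1000 * R)) * |U y| :=
            mul_le_mul_of_nonneg_right ht1 hu0
        _ = |U y| / (1000 * R) := by ring
    calc Q y = t ^ 2 * ((U y) ^ 2 * Real.exp |t * U y|) := by rw [hQdef]; ring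
      _ ≤ t ^ 2 * ((400 * R ^ 2 * Real.exp (100 * |U y| / (1000 * R)))
            * Real.exp (|U y| / (1000 * R))) := by
          apply mul_le_mul_of_nonneg_left _ (sq_nonneg t)
          apply mul_le_mul h1 h4 (Real.exp_pos _).le (by positivity)
      _ = t ^ 2 * (400 * R ^ 2) * Real.exp (100 * |U y| / (1000 * R) + |U y| / (1000 * R)) := by
          rw [Real.exp_add]; ring
      _ ≤ t ^ 2 * (400 * R ^ 2) * Real.exp (101 * (|y j| + κ) / (1000 * R)) := by
          apply mul_le_mul_of_nonneg_left _ (by positivity)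
          apply Real.exp_le_exp.2
          rw [← add_div, div_le_div_iff₀ hξ0 hξ0]
          nlinarith [hUabs y, abs_nonneg (y j)]
      _ = D * Real.exp (q * |y j|) := by
          rw [hDdef, hqdef, show 101 * (|y j| + κ) / (1000 * R)
            = 101 * κ / (1000 * R) + 101 / (1000 * R) * |y j| from by ring, Real.exp_add]
          ring
  have hQcont : Continuous Q :=
    ((continuous_const.mul hUcont).pow 2).mul
      (Real.continuous_exp.comp (continuous_const.mul hUcont).abs)
  have hQint : Integrable Q (gmmLaw βs σ) := by
    refine (hexpint.const_mul D).mono' hQcont.aestronglyMeasurable (ae_of_all _ fun y => ?_)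
    rw [Real.norm_eq_abs, abs_of_nonneg (by positivity : (0:ℝ) ≤ Q y)]
    exact hQle y
  have hQval : ∫ y, Q y ∂(gmmLaw βs σ)
      ≤ D * (Real.exp (q * |βs j|) * (2 * Real.exp (σ ^ 2 * q ^ 2 / 2))) := by
    calc ∫ y, Q y ∂(gmmLaw βs σ)
        ≤ ∫ y, D * Real.exp (q * |y j|) ∂(gmmLaw βs σ) :=
          integral_mono hQint (hexpint.const_mul D) hQle
      _ = D * ∫ y, Real.exp (q * |y j|) ∂(gmmLaw βs σ) := integral_const_mul _ _
      _ ≤ D * (Real.exp (q * |βs j|) * (2 * Real.exp (σ ^ 2 * q ^ 2 / 2))) :=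
          mul_le_mul_of_nonneg_left hexpval hD0
  -- numeric bound on the RHS
  have hqR : q * R = 101 / 1000 := by
    rw [hqdef]
    field_simp
  have hnum : D * (Real.exp (q * |βs j|) * (2 * Real.exp (σ ^ 2 * q ^ 2 / 2)))
      ≤ (1000 * R) ^ 2 * t ^ 2 / 2 := by
    have hE1 : 101 * κ / (1000 * R) ≤ 0.505 := by
      rw [div_le_iff₀ hξ0]
      nlinarith
    have hE2 : q * |βs j| ≤ 0.101 := by
      calc q * |βs j| ≤ q * R := mul_le_mul_of_nonneg_left (hMle.trans hLR) hq0
        _ = 0.101 := by rw [hqR]; norm_num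
    have hE3 : σ ^ 2 * q ^ 2 / 2 ≤ 0.006 := by
      have h5 : (σ * q) ^ 2 ≤ (101 / 1000) ^ 2 := by
        apply sq_le_sq'
        · nlinarith [mul_nonneg hσ.le hq0]
        · calc σ * q ≤ R * q := mul_le_mul_of_nonneg_right hσR hq0
            _ = 101 / 1000 := by rw [mul_comm, hqR]
      nlinarith
    have hEsum : 101 * κ / (1000 * R) + (q * |βs j| + σ ^ 2 * q ^ 2 / 2) ≤ 1 := by
      linarith
    have hexp3 : Real.exp (101 * κ / (1000 * R) + (q * |βs j| + σ ^ 2 * q ^ 2 / 2)) ≤ 3 :=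
      le_trans (Real.exp_le_exp.2 hEsum) exp_one_le_three
    have hlhs : D * (Real.exp (q * |βs j|) * (2 * Real.exp (σ ^ 2 * q ^ 2 / 2)))
        = t ^ 2 * (800 * R ^ 2)
          * Real.exp (101 * κ / (1000 * R) + (q * |βs j| + σ ^ 2 * q ^ 2 / 2)) := by
      rw [hDdef, Real.exp_add, Real.exp_add]
      ring
    rw [hlhs]
    have h6 : t ^ 2 * (800 * R ^ 2)
        * Real.exp (101 * κ / (1000 * R) + (q * |βs j| + σ ^ 2 * q ^ 2 / 2))
        ≤ t ^ 2 * (800 * R ^ 2) * 3 :=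
      mul_le_mul_of_nonneg_left hexp3 (by positivity)
    nlinarith [sq_nonneg t, sq_nonneg R, mul_nonneg (sq_nonneg t) (sq_nonneg R)]
  -- put everything together
  have hintc : Integrable (fun _ : Fin d → ℝ => (1:ℝ)) (gmmLaw βs σ) := integrable_const 1
  have hinttU : Integrable (fun y => t * U y) (gmmLaw βs σ) := hUint.const_mul t
  have hint1 : Integrable (fun y => 1 + t * U y) (gmmLaw βs σ) := hintc.add hinttU
  have hint2 : Integrable (fun y => 1 + t * U y + Q y) (gmmLaw βs σ) := hint1.add hQint
  have hmono : ∫ y, Real.exp (t * U y) ∂(gmmLaw βs σ)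
      ≤ ∫ y, (1 + t * U y + Q y) ∂(gmmLaw βs σ) := by
    refine integral_mono_of_nonneg (ae_of_all _ fun y => (Real.exp_pos _).le)
      hint2 (ae_of_all _ fun y => ?_)
    have := exp_le_quad (t * U y)
    rw [hQdef]
    simpa using this
  have hsplit : ∫ y, (1 + t * U y + Q y) ∂(gmmLaw βs σ)
      = 1 + t * ∫ y, U y ∂(gmmLaw βs σ) + ∫ y, Q y ∂(gmmLaw βs σ) := by
    rw [integral_add hint1 hQint, integral_add hintc hinttU, integral_const,
      probReal_univ, one_smul, integral_const_mul]
  calc ∫ y, Real.exp (t * (W y - c)) ∂(gmmLaw βs σ)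
      = ∫ y, Real.exp (t * U y) ∂(gmmLaw βs σ) := rfl
    _ ≤ ∫ y, (1 + t * U y + Q y) ∂(gmmLaw βs σ) := hmono
    _ = 1 + ∫ y, Q y ∂(gmmLaw βs σ) := by rw [hsplit, hUzero]; ring
    _ ≤ 1 + (1000 * R) ^ 2 * t ^ 2 / 2 := by
        have := hQval.trans hnum
        linarith
    _ ≤ Real.exp ((1000 * R) ^ 2 * t ^ 2 / 2) := by
        have := Real.add_one_le_exp ((1000 * R) ^ 2 * t ^ 2 / 2)
        linarith

end Helpers

/-- in the Gaussian mixture model, each coordinate of the sample gradient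
`(2 w_β(Y) - 1) Y_j - β_j` is `C₁ √(‖β*‖_∞² + σ²)`-sub-exponential for `β` near `β*`. -/
theorem gmm_gradient_subexponential :
    ∃ C₁ : ℝ, 0 < C₁ ∧
      ∀ (d s : ℕ) (σ : ℝ) (βs β : Fin d → ℝ), 0 < σ →
        l2 (β - βs) ≤ 1 / 4 * l2 βs → l0 β ≤ s →
        ∀ j : Fin d,
          SubExpOn (gmmLaw βs σ) (C₁ * Real.sqrt (linf βs ^ 2 + σ ^ 2))
            (fun y => (2 * wGMM σ β y - 1) * y j - β j) := by
  refine ⟨1000, by norm_num, ?_⟩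
  intro d s σ βs β hσ _ _ j t ht
  exact gmm_main_est σ βs β hσ j t ht
end

section
/- Let β*, β̄, β ∈ ℝ^d with ‖β*‖₀ ≤ s*, let k ∈ (0,1), and let s be a positive integer. Let Ŝ = supp(β, s) and β̄⁺ = trunc(β̄, Ŝ). If ‖β̄ − β*‖₂ ≤ k‖β*‖₂, s ≥ (4(1+k)²/(1−k)²)·s*, and √s·‖β − β̄‖_∞ ≤ ((1−k)²/(2(1+k)))·‖β*‖₂, then ‖β̄⁺ − β*‖₂ ≤ (2√2·√s*/√(1−k))·‖β − β̄‖_∞ + (1 + 4√(s*/s))^{1/2}·‖β̄ − β*‖₂. -/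
open MeasureTheory ProbabilityTheory Real
open scoped ENNReal NNReal

set_option maxHeartbeats 1000000 in
/-- error bound for truncating `β̄` to a top-`s` index set of `β`. -/
theorem hard_thresholding_error_bound (d sstar s : ℕ) (k : ℝ)
    (βs βbar β : Fin d → ℝ) (S : Finset (Fin d))
    (hspos : 0 < s) (hk0 : 0 < k) (hk1 : k < 1)
    (hsparse : l0 βs ≤ sstar)
    (hS : IsTopIdx β s S)
    (hclose : l2 (βbar - βs) ≤ k * l2 βs)
    (hs : 4 * (1 + k) ^ 2 / (1 - k) ^ 2 * sstar ≤ (s : ℝ))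
    (hinf : Real.sqrt s * linf (β - βbar) ≤ (1 - k) ^ 2 / (2 * (1 + k)) * l2 βs) :
    l2 (trunc βbar S - βs) ≤
      2 * Real.sqrt 2 * Real.sqrt sstar / Real.sqrt (1 - k) * linf (β - βbar) +
        Real.sqrt (1 + 4 * Real.sqrt ((sstar : ℝ) / s)) * l2 (βbar - βs) := by
  classical
  have hSne : S.Nonempty := Finset.card_pos.mp (hS.1 ▸ hspos)
  obtain ⟨i₀, hi₀S⟩ := hSne
  set ε := linf (β - βbar) with hεdef
  classical
  have hSne : S.Nonempty := Finset.card_pos.mp (hS.1 ▸ hspos)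
  obtain ⟨i₀, hi₀S⟩ := hSne
  set ε := linf (β - βbar) with hεdef
  have hεb : ∀ j, |β j - βbar j| ≤ ε := by
    intro j
    have h := le_ciSup (f := fun j => |(β - βbar) j|)
      (Set.Finite.bddAbove (Set.finite_range _)) j
    simpa [linf, hεdef] using h
  have hε0 : 0 ≤ ε := le_trans (abs_nonneg _) (hεb i₀)
  set δ := l2 (βbar - βs) with hδdef
  have hδ0 : 0 ≤ δ := Real.sqrt_nonneg _
  set u : Fin d → ℝ := fun j => βbar j - βs j with hudef
  have hδsq : δ ^ 2 = ∑ j, u j ^ 2 := by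
    rw [hδdef]; simp only [l2]
    rw [Real.sq_sqrt (by positivity)]
    exact Finset.sum_congr rfl fun j _ => by simp [hudef]
  have huqle : ∀ T : Finset (Fin d), ∑ j ∈ T, u j ^ 2 ≤ δ ^ 2 := by
    intro T; rw [hδsq]
    exact Finset.sum_le_sum_of_subset_of_nonneg (Finset.subset_univ T)
      (fun i _ _ => sq_nonneg _)
  have huT : ∀ T : Finset (Fin d), Real.sqrt (∑ j ∈ T, u j ^ 2) ≤ δ := by
    intro T
    calc Real.sqrt (∑ j ∈ T, u j ^ 2) ≤ Real.sqrt (δ ^ 2) := Real.sqrt_le_sqrt (huqle T)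
      _ = δ := Real.sqrt_sq hδ0
  set m := S.inf' ⟨i₀, hi₀S⟩ (fun i => |β i|) with hmdef
  have hm0 : 0 ≤ m := Finset.le_inf' _ _ (fun i _ => abs_nonneg _)
  have hmle : ∀ i ∈ S, m ≤ |β i| := fun i hi => Finset.inf'_le _ hi
  have hjm : ∀ j, j ∉ S → |β j| ≤ m := fun j hj =>
    Finset.le_inf' _ _ (fun i hi => hS.2 i hi j hj)
  have cauchy : ∀ T : Finset (Fin d),
      ∑ j ∈ T, |u j| ≤ Real.sqrt T.card * Real.sqrt (∑ j ∈ T, u j ^ 2) := by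
    intro T
    have h := Real.sum_mul_le_sqrt_mul_sqrt T (fun _ => (1 : ℝ)) (fun j => |u j|)
    simpa [sq_abs] using h
  have hkk : (0 : ℝ) < 1 - k := by linarith
  have hspos' : (0 : ℝ) < s := by exact_mod_cast hspos
  have hs4 : 4 * (sstar : ℝ) ≤ s := by
    refine le_trans ?_ hs
    have h2 : (0 : ℝ) < (1 - k) ^ 2 := by positivity
    have h3 : (1 : ℝ) ≤ (1 + k) ^ 2 / (1 - k) ^ 2 := by
      rw [le_div_iff₀ h2]; nlinarith
    have h4 := mul_le_mul_of_nonneg_right h3 (Nat.cast_nonneg (α := ℝ) sstar)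
    calc 4 * (sstar : ℝ) = 4 * (1 * sstar) := by ring
      _ ≤ 4 * ((1 + k) ^ 2 / (1 - k) ^ 2 * sstar) := by linarith
      _ = 4 * (1 + k) ^ 2 / (1 - k) ^ 2 * sstar := by ring
  set t := Real.sqrt ((sstar : ℝ) / s) with htdef
  have ht0 : 0 ≤ t := Real.sqrt_nonneg _
  have ht2 : t ≤ 1 / 2 := by
    rw [htdef, show (1 / 2 : ℝ) = Real.sqrt ((1 / 2) ^ 2) from
      (Real.sqrt_sq (by norm_num)).symm]
    apply Real.sqrt_le_sqrt
    rw [div_le_iff₀ hspos']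
    nlinarith
  have hteq : t = Real.sqrt sstar / Real.sqrt s := Real.sqrt_div (Nat.cast_nonneg _) _
  set I := Sᶜ.filter (fun j => βs j ≠ 0) with hIdef
  have hIcard : (I.card : ℝ) ≤ sstar := by
    have h1 : I ⊆ Finset.univ.filter (fun j => βs j ≠ 0) :=
      Finset.filter_subset_filter _ (Finset.subset_univ _)
    have h2 : I.card ≤ sstar := le_trans (Finset.card_le_card h1) hsparse
    exact_mod_cast h2
  have hIdisj : Disjoint S I := by
    refine Finset.disjoint_left.mpr fun a haS haI => ?_
    exact (Finset.mem_compl.mp (Finset.mem_of_mem_filter a haI)) haS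
  set c := ε + m with hcdef
  have hc0 : 0 ≤ c := add_nonneg hε0 hm0
  have key : ∑ j, (trunc βbar S - βs) j ^ 2 ≤ (δ + Real.sqrt sstar * c) ^ 2 := by
    have hsplit : ∑ j, (trunc βbar S - βs) j ^ 2
        = ∑ j ∈ S, u j ^ 2 + ∑ j ∈ Sᶜ, βs j ^ 2 := by
      rw [← Finset.sum_add_sum_compl S]
      congr 1
      · exact Finset.sum_congr rfl fun j hj => by simp [trunc, hj, hudef]
      · refine Finset.sum_congr rfl fun j hj => ?_
        have hj' : j ∉ S := Finset.mem_compl.mp hj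
        simp [trunc, hj']
    have hIeq : ∑ j ∈ Sᶜ, βs j ^ 2 = ∑ j ∈ I, βs j ^ 2 := by
      refine (Finset.sum_filter_of_ne ?_).symm
      intro x _ hfx h0
      exact hfx (by rw [h0]; norm_num)
    have hpt : ∀ j ∈ I, βs j ^ 2 ≤ (|u j| + c) ^ 2 := by
      intro j hj
      have hjS : j ∉ S := Finset.mem_compl.mp (Finset.mem_of_mem_filter j hj)
      have h1 : |β j| ≤ m := hjm j hjS
      have h2 : |βs j| ≤ |u j| + c := by
        have e : βs j = -(u j) + ((βbar j - β j) + β j) := by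
          show βs j = -(βbar j - βs j) + ((βbar j - β j) + β j); ring
        calc |βs j| = |(-(u j)) + ((βbar j - β j) + β j)| := by rw [← e]
          _ ≤ |(-(u j))| + |(βbar j - β j) + β j| := abs_add_le _ _
          _ ≤ |u j| + (|βbar j - β j| + |β j|) := by
              rw [abs_neg]; gcongr; exact abs_add_le _ _
          _ ≤ |u j| + (ε + m) := by
              gcongr
              · rw [abs_sub_comm]; exact hεb j
          _ = |u j| + c := by rw [hcdef]
      calc βs j ^ 2 = |βs j| ^ 2 := (sq_abs _).symm
        _ ≤ (|u j| + c) ^ 2 := pow_le_pow_left₀ (abs_nonneg _) h2 2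
    have hexp : ∑ j ∈ I, (|u j| + c) ^ 2
        = ∑ j ∈ I, u j ^ 2 + 2 * c * (∑ j ∈ I, |u j|) + I.card * c ^ 2 := by
      have h : ∀ j ∈ I, (|u j| + c) ^ 2 = u j ^ 2 + 2 * c * |u j| + c ^ 2 := by
        intro j _; rw [add_sq, sq_abs]; ring
      rw [Finset.sum_congr rfl h, Finset.sum_add_distrib, Finset.sum_add_distrib,
        ← Finset.mul_sum, Finset.sum_const, nsmul_eq_mul]
    have hSI : ∑ j ∈ S, u j ^ 2 + ∑ j ∈ I, u j ^ 2 ≤ δ ^ 2 := by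
      rw [← Finset.sum_union hIdisj]; exact huqle _
    have hmid : 2 * c * (∑ j ∈ I, |u j|) ≤ 2 * c * (Real.sqrt sstar * δ) := by
      apply mul_le_mul_of_nonneg_left _ (by positivity)
      calc ∑ j ∈ I, |u j| ≤ Real.sqrt I.card * Real.sqrt (∑ j ∈ I, u j ^ 2) := cauchy I
        _ ≤ Real.sqrt sstar * δ :=
            mul_le_mul (Real.sqrt_le_sqrt hIcard) (huT I) (Real.sqrt_nonneg _)
              (Real.sqrt_nonneg _)
    have hlast : (I.card : ℝ) * c ^ 2 ≤ (Real.sqrt sstar) ^ 2 * c ^ 2 := by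
      apply mul_le_mul_of_nonneg_right _ (sq_nonneg _)
      rw [Real.sq_sqrt (Nat.cast_nonneg _)]; exact hIcard
    calc ∑ j, (trunc βbar S - βs) j ^ 2
        = ∑ j ∈ S, u j ^ 2 + ∑ j ∈ I, βs j ^ 2 := by rw [hsplit, hIeq]
      _ ≤ ∑ j ∈ S, u j ^ 2 + (∑ j ∈ I, u j ^ 2 + 2 * c * (∑ j ∈ I, |u j|)
            + I.card * c ^ 2) := by
          rw [← hexp]; exact add_le_add_right (Finset.sum_le_sum hpt) _
      _ ≤ δ ^ 2 + 2 * c * (Real.sqrt sstar * δ) + (Real.sqrt sstar) ^ 2 * c ^ 2 := by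
          linarith
      _ = (δ + Real.sqrt sstar * c) ^ 2 := by ring
  have hE : l2 (trunc βbar S - βs) ≤ δ + Real.sqrt sstar * c := by
    simp only [l2]
    calc Real.sqrt (∑ j, (trunc βbar S - βs) j ^ 2)
        ≤ Real.sqrt ((δ + Real.sqrt sstar * c) ^ 2) := Real.sqrt_le_sqrt key
      _ = δ + Real.sqrt sstar * c := Real.sqrt_sq
          (add_nonneg hδ0 (mul_nonneg (Real.sqrt_nonneg _) hc0))
  set T := S.filter (fun j => βs j = 0) with hTdef
  have hTcard : (s : ℝ) / 2 ≤ T.card := by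
    have h1 : (S.filter (fun j => ¬ βs j = 0)).card ≤ sstar := by
      refine le_trans (Finset.card_le_card ?_) hsparse
      exact Finset.filter_subset_filter _ (Finset.subset_univ _)
    have h2 : T.card + (S.filter (fun j => ¬ βs j = 0)).card = s := by
      rw [hTdef, Finset.card_filter_add_card_filter_not, hS.1]
    have h1' : ((S.filter (fun j => ¬ βs j = 0)).card : ℝ) ≤ sstar := by exact_mod_cast h1
    have h2' : (T.card : ℝ) + ((S.filter (fun j => ¬ βs j = 0)).card : ℝ) = s := by
      exact_mod_cast h2
    linarith
  have hTpos : (0 : ℝ) < T.card := lt_of_lt_of_le (by positivity) hTcard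
  have hmT : (T.card : ℝ) * m ^ 2 ≤ (Real.sqrt T.card * ε + δ) ^ 2 := by
    have h1 : ∀ i ∈ T, m ^ 2 ≤ (ε + |u i|) ^ 2 := by
      intro i hi
      obtain ⟨hiS, hβ0⟩ := Finset.mem_filter.mp hi
      have hb : |β i| ≤ ε + |u i| := by
        have e : β i = (β i - βbar i) + u i := by
          show β i = (β i - βbar i) + (βbar i - βs i); rw [hβ0]; ring
        calc |β i| = |(β i - βbar i) + u i| := by rw [← e]
          _ ≤ |β i - βbar i| + |u i| := abs_add_le _ _
          _ ≤ ε + |u i| := by gcongr; exact hεb i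
      exact pow_le_pow_left₀ hm0 (le_trans (hmle i hiS) hb) 2
    have hexp2 : ∑ i ∈ T, (ε + |u i|) ^ 2
        = T.card * ε ^ 2 + 2 * ε * (∑ i ∈ T, |u i|) + ∑ i ∈ T, u i ^ 2 := by
      have h : ∀ i ∈ T, (ε + |u i|) ^ 2 = ε ^ 2 + 2 * ε * |u i| + u i ^ 2 := by
        intro i _; rw [add_sq, sq_abs]
      rw [Finset.sum_congr rfl h, Finset.sum_add_distrib, Finset.sum_add_distrib,
        ← Finset.mul_sum, Finset.sum_const, nsmul_eq_mul]
    have hsqT : (Real.sqrt (T.card : ℝ)) ^ 2 = (T.card : ℝ) :=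
      Real.sq_sqrt (Nat.cast_nonneg _)
    have hA : ∑ i ∈ T, |u i| ≤ Real.sqrt T.card * δ := by
      calc ∑ i ∈ T, |u i| ≤ Real.sqrt T.card * Real.sqrt (∑ i ∈ T, u i ^ 2) := cauchy T
        _ ≤ Real.sqrt T.card * δ := mul_le_mul_of_nonneg_left (huT T) (Real.sqrt_nonneg _)
    have hB : ∑ i ∈ T, u i ^ 2 ≤ δ ^ 2 := huqle T
    have hA' := mul_le_mul_of_nonneg_left hA (by linarith : (0:ℝ) ≤ 2 * ε)
    calc (T.card : ℝ) * m ^ 2 = ∑ i ∈ T, m ^ 2 := by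
          rw [Finset.sum_const, nsmul_eq_mul]
      _ ≤ ∑ i ∈ T, (ε + |u i|) ^ 2 := Finset.sum_le_sum h1
      _ = T.card * ε ^ 2 + 2 * ε * (∑ i ∈ T, |u i|) + ∑ i ∈ T, u i ^ 2 := hexp2
      _ ≤ T.card * ε ^ 2 + 2 * ε * (Real.sqrt T.card * δ) + δ ^ 2 := by linarith
      _ = (Real.sqrt T.card * ε + δ) ^ 2 := by rw [add_sq, mul_pow, hsqT]; ring
  have hmb : m ≤ ε + Real.sqrt 2 * δ / Real.sqrt s := by
    have hsT : 0 < Real.sqrt (T.card : ℝ) := Real.sqrt_pos.mpr hTpos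
    have hst : Real.sqrt T.card * m ≤ Real.sqrt T.card * ε + δ := by
      calc Real.sqrt T.card * m = Real.sqrt ((T.card : ℝ) * m ^ 2) := by
            rw [Real.sqrt_mul (Nat.cast_nonneg _), Real.sqrt_sq hm0]
        _ ≤ Real.sqrt ((Real.sqrt T.card * ε + δ) ^ 2) := Real.sqrt_le_sqrt hmT
        _ = Real.sqrt T.card * ε + δ := Real.sqrt_sq (by positivity)
    have h1 : m ≤ ε + δ / Real.sqrt T.card := by
      rw [← mul_le_mul_iff_of_pos_left hsT]
      calc Real.sqrt T.card * m ≤ Real.sqrt T.card * ε + δ := hst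
        _ = Real.sqrt T.card * (ε + δ / Real.sqrt T.card) := by
            field_simp
    have h2 : δ / Real.sqrt T.card ≤ Real.sqrt 2 * δ / Real.sqrt s := by
      rw [div_le_div_iff₀ hsT (Real.sqrt_pos.mpr hspos')]
      have h3 : Real.sqrt s ≤ Real.sqrt 2 * Real.sqrt T.card := by
        rw [← Real.sqrt_mul (by norm_num)]
        exact Real.sqrt_le_sqrt (by linarith)
      calc δ * Real.sqrt s ≤ δ * (Real.sqrt 2 * Real.sqrt T.card) :=
            mul_le_mul_of_nonneg_left h3 hδ0
        _ = Real.sqrt 2 * δ * Real.sqrt T.card := by ring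
    linarith
  have hk1' : Real.sqrt (1 - k) ≤ 1 := Real.sqrt_le_one.mpr (by linarith)
  have hkpos : 0 < Real.sqrt (1 - k) := Real.sqrt_pos.mpr hkk
  have h12 : (1 : ℝ) ≤ Real.sqrt 2 := by
    rw [show (1 : ℝ) = Real.sqrt 1 from Real.sqrt_one.symm]
    exact Real.sqrt_le_sqrt (by norm_num)
  have hcoef1 : 2 * Real.sqrt sstar ≤ 2 * Real.sqrt 2 * Real.sqrt sstar / Real.sqrt (1 - k) := by
    rw [le_div_iff₀ hkpos]
    nlinarith [mul_nonneg (Real.sqrt_nonneg (sstar : ℝ)) (sub_nonneg.mpr hk1'),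
      mul_nonneg (Real.sqrt_nonneg (sstar : ℝ)) (sub_nonneg.mpr h12)]
  have h2le : Real.sqrt 2 ≤ 3 / 2 := by
    rw [show (3 / 2 : ℝ) = Real.sqrt ((3 / 2) ^ 2) from (Real.sqrt_sq (by norm_num)).symm]
    exact Real.sqrt_le_sqrt (by norm_num)
  have hcoef2 : 1 + Real.sqrt 2 * t ≤ Real.sqrt (1 + 4 * t) := by
    rw [show 1 + Real.sqrt 2 * t = Real.sqrt ((1 + Real.sqrt 2 * t) ^ 2) from
      (Real.sqrt_sq (by positivity)).symm]
    apply Real.sqrt_le_sqrt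
    have h22 : Real.sqrt 2 ^ 2 = 2 := Real.sq_sqrt (by norm_num)
    nlinarith [mul_nonneg ht0 ht0, mul_le_mul_of_nonneg_left h2le ht0,
      mul_le_mul_of_nonneg_left ht2 ht0]
  have hsq : Real.sqrt (s : ℝ) ≠ 0 := ne_of_gt (Real.sqrt_pos.mpr hspos')
  calc l2 (trunc βbar S - βs) ≤ δ + Real.sqrt sstar * c := hE
    _ ≤ δ + Real.sqrt sstar * (ε + (ε + Real.sqrt 2 * δ / Real.sqrt s)) := by
        have hcle : c ≤ ε + (ε + Real.sqrt 2 * δ / Real.sqrt s) := by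
          rw [hcdef]; exact add_le_add_right hmb ε
        exact add_le_add_right (mul_le_mul_of_nonneg_left hcle (Real.sqrt_nonneg _)) δ
    _ = 2 * Real.sqrt sstar * ε + (1 + Real.sqrt 2 * t) * δ := by
        rw [hteq]; field_simp; ring
    _ ≤ 2 * Real.sqrt 2 * Real.sqrt sstar / Real.sqrt (1 - k) * ε
          + Real.sqrt (1 + 4 * t) * δ := by
        apply add_le_add
        · exact mul_le_mul_of_nonneg_right hcoef1 hε0
        · exact mul_le_mul_of_nonneg_right hcoef2 hδ0
end

section
/- Let β* ∈ ℝ^d, R > 0, B = {β : ‖β − β*‖₂ ≤ R}, and let Q : ℝ^d × ℝ^d → ℝ be differentiable in its first argument with gradient ∇₁Q. Assume β* = argmax_β Q(β; β*); Q(·; β*) is μ-smooth and υ-strongly concave on B with 0 < υ ≤ μ; and ‖∇₁Q(β; β*) − ∇₁Q(β; β)‖₂ ≤ γ‖β − β*‖₂ for all β ∈ B. Then for every β ∈ B, taking step size η = 2/(υ + μ): ‖β + η·∇₁Q(β; β) − β*‖₂ ≤ (1 − 2(υ − γ)/(υ + μ))·‖β − β*‖₂. -/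
open MeasureTheory ProbabilityTheory Real
open scoped ENNReal NNReal

lemma WithLp.equiv_symm_sub {d : ℕ} (x y : Fin d → ℝ) :
    (WithLp.equiv 2 (Fin d → ℝ)).symm (x - y) =
      (WithLp.equiv 2 (Fin d → ℝ)).symm x - (WithLp.equiv 2 (Fin d → ℝ)).symm y := rfl

lemma WithLp.equiv_symm_add {d : ℕ} (x y : Fin d → ℝ) :
    (WithLp.equiv 2 (Fin d → ℝ)).symm (x + y) =
      (WithLp.equiv 2 (Fin d → ℝ)).symm x + (WithLp.equiv 2 (Fin d → ℝ)).symm y := rfl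

lemma WithLp.equiv_symm_smul {d : ℕ} (c : ℝ) (x : Fin d → ℝ) :
    (WithLp.equiv 2 (Fin d → ℝ)).symm (c • x) = c • (WithLp.equiv 2 (Fin d → ℝ)).symm x := rfl

open RealInnerProductSpace in
private lemma l2_eq_norm' {d : ℕ} (v : Fin d → ℝ) :
    l2 v = ‖(WithLp.equiv 2 (Fin d → ℝ)).symm v‖ := by
  simp [l2, EuclideanSpace.norm_eq, sq_abs]

open RealInnerProductSpace in
private lemma inp_eq_inner' {d : ℕ} (u v : Fin d → ℝ) :
    inp u v = (inner ℝ ((WithLp.equiv 2 (Fin d → ℝ)).symm u)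
      ((WithLp.equiv 2 (Fin d → ℝ)).symm v) : ℝ) := by
  simp [inp, PiLp.inner_apply, RCLike.inner_apply, mul_comm]

open RealInnerProductSpace

set_option maxHeartbeats 1000000 in

lemma key_contraction {E : Type*} [NormedAddCommGroup E] [InnerProductSpace ℝ E]
    (R γ μs υ : ℝ) (βs : E) (Q : E → E → ℝ) (g : E → E → E)
    (hR : 0 < R)
    (hmax : ∀ b, Q b βs ≤ Q βs βs)
    (hυ : 0 < υ) (hυμ : υ ≤ μs)
    (hsm : ∀ b b', ‖b - βs‖ ≤ R → ‖b' - βs‖ ≤ R →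
      Q b βs ≥ Q b' βs + ⟪b - b', g b' βs⟫ - μs / 2 * ‖b - b'‖ ^ 2)
    (hco : ∀ b b', ‖b - βs‖ ≤ R → ‖b' - βs‖ ≤ R →
      Q b βs ≤ Q b' βs + ⟪b - b', g b' βs⟫ - υ / 2 * ‖b - b'‖ ^ 2)
    (hlip : ∀ b, ‖b - βs‖ ≤ R → ‖g b βs - g b b‖ ≤ γ * ‖b - βs‖) :
    ∀ b, ‖b - βs‖ ≤ R →
      ‖b + (2 / (υ + μs)) • g b b - βs‖ ≤ (1 - 2 * (υ - γ) / (υ + μs)) * ‖b - βs‖ := by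
  have hμ : 0 < μs := lt_of_lt_of_le hυ hυμ
  have hsum : 0 < υ + μs := by linarith
  have hηpos : 0 < 2 / (υ + μs) := by positivity
  have h00 : ‖βs - βs‖ ≤ R := by simp [hR.le]
  have nsq : ∀ (c : ℝ) (v : E), ‖c • v‖ ^ 2 = c ^ 2 * ‖v‖ ^ 2 := fun c v => by
    rw [norm_smul, mul_pow, Real.norm_eq_abs, sq_abs]
  -- Step 0 : g βs βs = 0
  have hg0 : g βs βs = 0 := by
    by_contra hne
    have hgn : 0 < ‖g βs βs‖ := norm_pos_iff.mpr hne
    set t : ℝ := min (R / ‖g βs βs‖) (1 / μs) with ht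
    have htpos : 0 < t := lt_min (by positivity) (by positivity)
    have hx : ‖(βs + t • g βs βs) - βs‖ ≤ R := by
      rw [add_sub_cancel_left, norm_smul, Real.norm_of_nonneg htpos.le]
      calc t * ‖g βs βs‖ ≤ (R / ‖g βs βs‖) * ‖g βs βs‖ :=
            mul_le_mul_of_nonneg_right (min_le_left _ _) hgn.le
        _ = R := by field_simp
    have h2 := hsm (βs + t • g βs βs) βs hx h00
    have h3 := hmax (βs + t • g βs βs)
    rw [add_sub_cancel_left, real_inner_smul_left, real_inner_self_eq_norm_sq, nsq] at h2
    have htμ : t * μs ≤ 1 := by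
      calc t * μs ≤ (1 / μs) * μs := mul_le_mul_of_nonneg_right (min_le_right _ _) hμ.le
        _ = 1 := by field_simp
    nlinarith [mul_pos htpos (mul_pos hgn hgn)]
  intro b hb
  rcases eq_or_ne b βs with rfl | hne
  · simp [hg0]
  obtain ⟨Δ, hΔ⟩ : ∃ v, b - βs = v := ⟨_, rfl⟩
  obtain ⟨G, hG⟩ : ∃ v, g b βs = v := ⟨_, rfl⟩
  obtain ⟨G', hG'⟩ : ∃ v, g b b = v := ⟨_, rfl⟩
  rw [hΔ] at hb
  have hrpos : 0 < ‖Δ‖ := by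
    rw [← hΔ]; exact norm_pos_iff.mpr (sub_ne_zero.mpr hne)
  -- pointwise sandwich inequalities at βs + y
  have hA' : ∀ y : E, ‖y‖ ≤ R →
      ⟪y - Δ, G⟫ - μs / 2 * ‖y - Δ‖ ^ 2 + (Q b βs - Q βs βs) ≤ -(υ / 2) * ‖y‖ ^ 2 := by
    intro y hy
    have hyB : ‖(βs + y) - βs‖ ≤ R := by rwa [add_sub_cancel_left]
    have h1 := hsm (βs + y) b hyB (hΔ ▸ hb)
    have h2 := hco (βs + y) βs hyB h00
    have he : βs + y - b = y - Δ := by rw [← hΔ]; abel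
    rw [he, hG] at h1
    rw [add_sub_cancel_left, hg0, inner_zero_right] at h2
    linarith
  have hB' : ∀ y : E, ‖y‖ ≤ R →
      -(μs / 2) * ‖y‖ ^ 2 ≤ (Q b βs - Q βs βs) + ⟪y - Δ, G⟫ - υ / 2 * ‖y - Δ‖ ^ 2 := by
    intro y hy
    have hyB : ‖(βs + y) - βs‖ ≤ R := by rwa [add_sub_cancel_left]
    have h1 := hsm (βs + y) βs hyB h00
    have h2 := hco (βs + y) b hyB (hΔ ▸ hb)
    have he : βs + y - b = y - Δ := by rw [← hΔ]; abel
    rw [he, hG] at h2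
    rw [add_sub_cancel_left, hg0, inner_zero_right] at h1
    linarith
  have hDlow : ⟪Δ, G⟫ + υ / 2 * ‖Δ‖ ^ 2 ≤ Q b βs - Q βs βs := by
    have h1 := hco βs b h00 (hΔ ▸ hb)
    have he : βs - b = -Δ := by rw [← hΔ]; abel
    rw [he, hG, inner_neg_left, norm_neg] at h1
    linarith
  have hDhigh : Q b βs - Q βs βs ≤ ⟪Δ, G⟫ + μs / 2 * ‖Δ‖ ^ 2 := by
    have h1 := hsm βs b h00 (hΔ ▸ hb)
    have he : βs - b = -Δ := by rw [← hΔ]; abel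
    rw [he, hG, inner_neg_left, norm_neg] at h1
    linarith
  -- linear-in-y consequences
  have hAlin : ∀ y : E, ‖y‖ ≤ R →
      ⟪y, G + μs • Δ⟫ ≤ (μs - υ) / 2 * (‖y‖ ^ 2 + ‖Δ‖ ^ 2) := by
    intro y hy
    have h1 := hA' y hy
    rw [norm_sub_sq_real, inner_sub_left] at h1
    have e3 : ⟪y, G + μs • Δ⟫ = ⟪y, G⟫ + μs * ⟪y, Δ⟫ := by
      rw [inner_add_right, real_inner_smul_right]
    rw [e3]
    linarith [hDlow]
  have hBlin : ∀ y : E, ‖y‖ ≤ R →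
      -⟪y, G + υ • Δ⟫ ≤ (μs - υ) / 2 * (‖y‖ ^ 2 + ‖Δ‖ ^ 2) := by
    intro y hy
    have h1 := hB' y hy
    rw [norm_sub_sq_real, inner_sub_left] at h1
    have e3 : ⟪y, G + υ • Δ⟫ = ⟪y, G⟫ + υ * ⟪y, Δ⟫ := by
      rw [inner_add_right, real_inner_smul_right]
    rw [e3]
    linarith [hDhigh]
  -- norm bound helper
  have normbound : ∀ a : E,
      (∀ y : E, ‖y‖ ≤ R → ⟪y, a⟫ ≤ (μs - υ) / 2 * (‖y‖ ^ 2 + ‖Δ‖ ^ 2)) →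
      ‖a‖ ≤ (μs - υ) * ‖Δ‖ := by
    intro a ha
    rcases eq_or_ne a 0 with rfl | h0
    · simpa using mul_nonneg (by linarith : (0:ℝ) ≤ μs - υ) hrpos.le
    · have han : 0 < ‖a‖ := norm_pos_iff.mpr h0
      have hn : ‖(‖Δ‖ / ‖a‖) • a‖ = ‖Δ‖ := by
        rw [norm_smul, Real.norm_of_nonneg (by positivity), div_mul_cancel₀ _ han.ne']
      have h2 := ha _ (le_trans (le_of_eq hn) hb)
      rw [real_inner_smul_left, real_inner_self_eq_norm_sq, hn] at h2
      have h3 : ‖Δ‖ * ‖a‖ ≤ (μs - υ) * ‖Δ‖ ^ 2 := by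
        have e : ‖Δ‖ / ‖a‖ * ‖a‖ ^ 2 = ‖Δ‖ * ‖a‖ := by field_simp
        rw [e] at h2; linarith
      have h4 : ‖Δ‖ * ‖a‖ ≤ ‖Δ‖ * ((μs - υ) * ‖Δ‖) := by nlinarith
      exact le_of_mul_le_mul_left h4 hrpos
  have hnormA : ‖G + μs • Δ‖ ≤ (μs - υ) * ‖Δ‖ := normbound _ hAlin
  have hnormB : ‖G + υ • Δ‖ ≤ (μs - υ) * ‖Δ‖ := by
    have := normbound (-(G + υ • Δ)) (fun y hy => by
      rw [inner_neg_right]; exact hBlin y hy)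
    rwa [norm_neg] at this
  -- norm expansions
  have Ea : ‖G + μs • Δ‖ ^ 2 = ‖G‖ ^ 2 + 2 * (μs * ⟪Δ, G⟫) + μs ^ 2 * ‖Δ‖ ^ 2 := by
    rw [norm_add_sq_real, real_inner_smul_right, real_inner_comm Δ G, nsq]
  have Ec : ‖G + υ • Δ‖ ^ 2 = ‖G‖ ^ 2 + 2 * (υ * ⟪Δ, G⟫) + υ ^ 2 * ‖Δ‖ ^ 2 := by
    rw [norm_add_sq_real, real_inner_smul_right, real_inner_comm Δ G, nsq]
  -- coercivity
  have star : ‖G‖ ^ 2 + (μs + υ) * ⟪Δ, G⟫ + μs * υ * ‖Δ‖ ^ 2 ≤ 0 := by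
    rcases eq_or_lt_of_le hυμ with heq | hlt
    · subst heq
      have h0 : ‖G + υ • Δ‖ = 0 :=
        le_antisymm (by simpa using hnormA) (norm_nonneg _)
      have h1 : ‖G + υ • Δ‖ ^ 2 = 0 := by rw [h0]; ring
      rw [Ec] at h1
      nlinarith
    · have hspos : 0 < μs - υ := by linarith
      have hsne : μs - υ ≠ 0 := ne_of_gt hspos
      have hsinv : 0 < (μs - υ)⁻¹ := inv_pos.mpr hspos
      have key1 : (μs - υ)⁻¹ • (G + μs • Δ) - Δ = (μs - υ)⁻¹ • (G + υ • Δ) := by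
        match_scalars <;> field_simp <;> ring
      have key2 : -((μs - υ)⁻¹ • (G + υ • Δ)) - Δ = -((μs - υ)⁻¹ • (G + μs • Δ)) := by
        match_scalars <;> field_simp <;> ring
      have hy1n : ‖(μs - υ)⁻¹ • (G + μs • Δ)‖ ≤ ‖Δ‖ := by
        rw [norm_smul, Real.norm_of_nonneg hsinv.le]
        calc (μs - υ)⁻¹ * ‖G + μs • Δ‖ ≤ (μs - υ)⁻¹ * ((μs - υ) * ‖Δ‖) :=
              mul_le_mul_of_nonneg_left hnormA hsinv.le
          _ = ‖Δ‖ := by field_simp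
      have hy2n : ‖-((μs - υ)⁻¹ • (G + υ • Δ))‖ ≤ ‖Δ‖ := by
        rw [norm_neg, norm_smul, Real.norm_of_nonneg hsinv.le]
        calc (μs - υ)⁻¹ * ‖G + υ • Δ‖ ≤ (μs - υ)⁻¹ * ((μs - υ) * ‖Δ‖) :=
              mul_le_mul_of_nonneg_left hnormB hsinv.le
          _ = ‖Δ‖ := by field_simp
      have hI := hA' _ (le_trans hy1n hb)
      have hII := hB' _ (le_trans hy2n hb)
      rw [key1] at hI
      rw [key2] at hII
      -- scalar forms
      have eI1 : ⟪(μs - υ)⁻¹ • (G + υ • Δ), G⟫ =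
          (μs - υ)⁻¹ * (‖G‖ ^ 2 + υ * ⟪Δ, G⟫) := by
        rw [real_inner_smul_left, inner_add_left, real_inner_self_eq_norm_sq,
          real_inner_smul_left]
      have eI2 : ⟪-((μs - υ)⁻¹ • (G + μs • Δ)), G⟫ =
          -((μs - υ)⁻¹ * (‖G‖ ^ 2 + μs * ⟪Δ, G⟫)) := by
        rw [inner_neg_left, real_inner_smul_left, inner_add_left,
          real_inner_self_eq_norm_sq, real_inner_smul_left]
      have eN1 : ‖(μs - υ)⁻¹ • (G + υ • Δ)‖ ^ 2 =
          (μs - υ)⁻¹ ^ 2 * (‖G‖ ^ 2 + 2 * (υ * ⟪Δ, G⟫) + υ ^ 2 * ‖Δ‖ ^ 2) := by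
        rw [nsq, Ec]
      have eN2 : ‖(μs - υ)⁻¹ • (G + μs • Δ)‖ ^ 2 =
          (μs - υ)⁻¹ ^ 2 * (‖G‖ ^ 2 + 2 * (μs * ⟪Δ, G⟫) + μs ^ 2 * ‖Δ‖ ^ 2) := by
        rw [nsq, Ea]
      have eN2' : ‖-((μs - υ)⁻¹ • (G + υ • Δ))‖ ^ 2 =
          (μs - υ)⁻¹ ^ 2 * (‖G‖ ^ 2 + 2 * (υ * ⟪Δ, G⟫) + υ ^ 2 * ‖Δ‖ ^ 2) := by
        rw [norm_neg]; exact eN1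
      have eN1' : ‖-((μs - υ)⁻¹ • (G + μs • Δ))‖ ^ 2 =
          (μs - υ)⁻¹ ^ 2 * (‖G‖ ^ 2 + 2 * (μs * ⟪Δ, G⟫) + μs ^ 2 * ‖Δ‖ ^ 2) := by
        rw [norm_neg]; exact eN2
      rw [eI1, eN1, eN2] at hI
      rw [eI2, eN2', eN1'] at hII
      -- combine, eliminating Q-values
      have hIII : (μs - υ)⁻¹ * (2 * ‖G‖ ^ 2 + (μs + υ) * ⟪Δ, G⟫) ≤
          (μs - υ)⁻¹ ^ 2 *
            (μs * (‖G‖ ^ 2 + 2 * (υ * ⟪Δ, G⟫) + υ ^ 2 * ‖Δ‖ ^ 2)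
              - υ * (‖G‖ ^ 2 + 2 * (μs * ⟪Δ, G⟫) + μs ^ 2 * ‖Δ‖ ^ 2)) := by
        linarith [hI, hII]
      have hIV := mul_le_mul_of_nonneg_left hIII
        (by positivity : (0:ℝ) ≤ (μs - υ) ^ 2)
      have hc1 : ∀ X : ℝ, (μs - υ) ^ 2 * ((μs - υ)⁻¹ * X) = (μs - υ) * X := by
        intro X
        rw [sq, mul_assoc, ← mul_assoc (μs - υ) (μs - υ)⁻¹ X,
          mul_inv_cancel₀ hsne, one_mul]
      have hc2 : ∀ X : ℝ, (μs - υ) ^ 2 * ((μs - υ)⁻¹ ^ 2 * X) = X := by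
        intro X
        rw [← mul_assoc, ← mul_pow, mul_inv_cancel₀ hsne, one_pow, one_mul]
      have e1 : (μs - υ) ^ 2 * ((μs - υ)⁻¹ * (2 * ‖G‖ ^ 2 + (μs + υ) * ⟪Δ, G⟫)) =
          (μs - υ) * (2 * ‖G‖ ^ 2 + (μs + υ) * ⟪Δ, G⟫) := hc1 _
      have e2 : (μs - υ) ^ 2 * ((μs - υ)⁻¹ ^ 2 *
            (μs * (‖G‖ ^ 2 + 2 * (υ * ⟪Δ, G⟫) + υ ^ 2 * ‖Δ‖ ^ 2)
              - υ * (‖G‖ ^ 2 + 2 * (μs * ⟪Δ, G⟫) + μs ^ 2 * ‖Δ‖ ^ 2))) =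
          (μs - υ) * (‖G‖ ^ 2 - μs * υ * ‖Δ‖ ^ 2) := by
        rw [hc2]
        ring
      rw [e1, e2] at hIV
      have hV : 2 * ‖G‖ ^ 2 + (μs + υ) * ⟪Δ, G⟫ ≤ ‖G‖ ^ 2 - μs * υ * ‖Δ‖ ^ 2 :=
        le_of_mul_le_mul_left hIV hspos
      linarith
  -- final contraction
  have e0 : b + (2 / (υ + μs)) • g b b - βs =
      (Δ + (2 / (υ + μs)) • G) + (2 / (υ + μs)) • (G' - G) := by
    rw [← hΔ, ← hG, ← hG']; module
  have hexp : ‖Δ + (2 / (υ + μs)) • G‖ ^ 2 =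
      ‖Δ‖ ^ 2 + 2 * ((2 / (υ + μs)) * ⟪Δ, G⟫) + (2 / (υ + μs)) ^ 2 * ‖G‖ ^ 2 := by
    rw [norm_add_sq_real, real_inner_smul_right, nsq]
  have hκnn : 0 ≤ (μs - υ) / (υ + μs) := div_nonneg (by linarith) hsum.le
  have h1sq : ‖Δ + (2 / (υ + μs)) • G‖ ^ 2 ≤ ((μs - υ) / (υ + μs) * ‖Δ‖) ^ 2 := by
    rw [hexp]
    have e : ((μs - υ) / (υ + μs) * ‖Δ‖) ^ 2 =
        ((μs - υ) ^ 2 * ‖Δ‖ ^ 2) / ((υ + μs) ^ 2) := by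
      field_simp
    rw [e, le_div_iff₀ (by positivity : (0:ℝ) < (υ + μs) ^ 2)]
    have d1 : (2 / (υ + μs)) * (υ + μs) = 2 := div_mul_cancel₀ _ hsum.ne'
    have d2 : (2 / (υ + μs)) ^ 2 * (υ + μs) ^ 2 = 4 := by
      rw [← mul_pow, d1]; norm_num
    have eexp : (‖Δ‖ ^ 2 + 2 * ((2 / (υ + μs)) * ⟪Δ, G⟫) + (2 / (υ + μs)) ^ 2 * ‖G‖ ^ 2)
          * (υ + μs) ^ 2 =
        ‖Δ‖ ^ 2 * (υ + μs) ^ 2 + 4 * ⟪Δ, G⟫ * (υ + μs) + 4 * ‖G‖ ^ 2 := by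
      linear_combination (2 * ⟪Δ, G⟫ * (υ + μs)) * d1 + ‖G‖ ^ 2 * d2
    rw [eexp]
    linarith [star]
  have h1 : ‖Δ + (2 / (υ + μs)) • G‖ ≤ (μs - υ) / (υ + μs) * ‖Δ‖ := by
    have := Real.sqrt_le_sqrt h1sq
    rwa [Real.sqrt_sq (norm_nonneg _),
      Real.sqrt_sq (mul_nonneg hκnn (norm_nonneg _))] at this
  have h2 : ‖(2 / (υ + μs)) • (G' - G)‖ ≤ (2 / (υ + μs)) * (γ * ‖Δ‖) := by
    rw [norm_smul, Real.norm_of_nonneg hηpos.le]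
    refine mul_le_mul_of_nonneg_left ?_ hηpos.le
    rw [norm_sub_rev]
    have := hlip b (hΔ ▸ hb)
    rwa [hΔ, hG, hG'] at this
  have ecoef : (μs - υ) / (υ + μs) + (2 / (υ + μs)) * γ = 1 - 2 * (υ - γ) / (υ + μs) := by
    field_simp
    ring
  calc ‖b + (2 / (υ + μs)) • g b b - βs‖
      = ‖(Δ + (2 / (υ + μs)) • G) + (2 / (υ + μs)) • (G' - G)‖ := by rw [e0]
    _ ≤ ‖Δ + (2 / (υ + μs)) • G‖ + ‖(2 / (υ + μs)) • (G' - G)‖ := norm_add_le _ _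
    _ ≤ (μs - υ) / (υ + μs) * ‖Δ‖ + (2 / (υ + μs)) * (γ * ‖Δ‖) := add_le_add h1 h2
    _ = (1 - 2 * (υ - γ) / (υ + μs)) * ‖b - βs‖ := by rw [hΔ, ← ecoef]; ring


/-- contraction of the population gradient EM step. -/
theorem population_gradient_step_contraction (d : ℕ) (R γ μs υ : ℝ) (βs : Fin d → ℝ)
    (Q : (Fin d → ℝ) → (Fin d → ℝ) → ℝ)
    (gradQ : (Fin d → ℝ) → (Fin d → ℝ) → Fin d → ℝ)
    (hR : 0 < R)
    (hgrad : ∀ b x, HasFDerivAt (fun β => Q β b) (dotCLM (gradQ x b)) x)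
    (hmax : ∀ β, Q β βs ≤ Q βs βs)
    (hυ : 0 < υ) (hυμ : υ ≤ μs)
    (hsmooth : ∀ β β', l2 (β - βs) ≤ R → l2 (β' - βs) ≤ R →
      Q β βs ≥ Q β' βs + inp (β - β') (gradQ β' βs) - μs / 2 * l2 (β - β') ^ 2)
    (hconcave : ∀ β β', l2 (β - βs) ≤ R → l2 (β' - βs) ≤ R →
      Q β βs ≤ Q β' βs + inp (β - β') (gradQ β' βs) - υ / 2 * l2 (β - β') ^ 2)
    (hlip : ∀ β, l2 (β - βs) ≤ R → l2 (gradQ β βs - gradQ β β) ≤ γ * l2 (β - βs)) :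
    ∀ β, l2 (β - βs) ≤ R →
      l2 (β + (2 / (υ + μs)) • gradQ β β - βs) ≤
        (1 - 2 * (υ - γ) / (υ + μs)) * l2 (β - βs) := by
    classical
  intro β hβ
  have hnorm : ∀ u v : Fin d → ℝ,
      ‖(WithLp.equiv 2 (Fin d → ℝ)).symm u - (WithLp.equiv 2 (Fin d → ℝ)).symm v‖
        = l2 (u - v) := by
    intro u v
    rw [← WithLp.equiv_symm_sub, ← l2_eq_norm']
  have main := key_contraction (E := EuclideanSpace ℝ (Fin d)) R γ μs υ
    ((WithLp.equiv 2 (Fin d → ℝ)).symm βs)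
    (fun u v => Q (WithLp.equiv 2 (Fin d → ℝ) u) (WithLp.equiv 2 (Fin d → ℝ) v))
    (fun u v => (WithLp.equiv 2 (Fin d → ℝ)).symm
      (gradQ (WithLp.equiv 2 (Fin d → ℝ) u) (WithLp.equiv 2 (Fin d → ℝ) v)))
    hR ?_ hυ hυμ ?_ ?_ ?_ ((WithLp.equiv 2 (Fin d → ℝ)).symm β) ?_
  · simp only [Equiv.apply_symm_apply] at main
    have ev : (WithLp.equiv 2 (Fin d → ℝ)).symm β +
        (2 / (υ + μs)) • (WithLp.equiv 2 (Fin d → ℝ)).symm (gradQ β β) -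
        (WithLp.equiv 2 (Fin d → ℝ)).symm βs =
        (WithLp.equiv 2 (Fin d → ℝ)).symm (β + (2 / (υ + μs)) • gradQ β β - βs) := by
      rw [WithLp.equiv_symm_sub, WithLp.equiv_symm_add, WithLp.equiv_symm_smul]
    rw [ev, ← l2_eq_norm', hnorm] at main
    exact main
  · intro u
    simp only [Equiv.apply_symm_apply]
    exact hmax _
  · intro u u' hu hu'
    simp only [Equiv.apply_symm_apply] at hu hu' ⊢
    have hu2 : l2 ((WithLp.equiv 2 (Fin d → ℝ)) u - βs) ≤ R := by
      rw [← hnorm, Equiv.symm_apply_apply]; exact hu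
    have hu'2 : l2 ((WithLp.equiv 2 (Fin d → ℝ)) u' - βs) ≤ R := by
      rw [← hnorm, Equiv.symm_apply_apply]; exact hu'
    have H := hsmooth _ _ hu2 hu'2
    have einn : (inner ℝ (u - u') ((WithLp.equiv 2 (Fin d → ℝ)).symm
        (gradQ ((WithLp.equiv 2 (Fin d → ℝ)) u') βs)) : ℝ) =
        inp ((WithLp.equiv 2 (Fin d → ℝ)) u - (WithLp.equiv 2 (Fin d → ℝ)) u')
          (gradQ ((WithLp.equiv 2 (Fin d → ℝ)) u') βs) := by
      rw [inp_eq_inner', WithLp.equiv_symm_sub, Equiv.symm_apply_apply,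
        Equiv.symm_apply_apply]
    have enorm : ‖u - u'‖ =
        l2 ((WithLp.equiv 2 (Fin d → ℝ)) u - (WithLp.equiv 2 (Fin d → ℝ)) u') := by
      rw [l2_eq_norm', WithLp.equiv_symm_sub, Equiv.symm_apply_apply,
        Equiv.symm_apply_apply]
    rw [einn, enorm]
    exact H
  · intro u u' hu hu'
    simp only [Equiv.apply_symm_apply] at hu hu' ⊢
    have hu2 : l2 ((WithLp.equiv 2 (Fin d → ℝ)) u - βs) ≤ R := by
      rw [← hnorm, Equiv.symm_apply_apply]; exact hu
    have hu'2 : l2 ((WithLp.equiv 2 (Fin d → ℝ)) u' - βs) ≤ R := by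
      rw [← hnorm, Equiv.symm_apply_apply]; exact hu'
    have H := hconcave _ _ hu2 hu'2
    have einn : (inner ℝ (u - u') ((WithLp.equiv 2 (Fin d → ℝ)).symm
        (gradQ ((WithLp.equiv 2 (Fin d → ℝ)) u') βs)) : ℝ) =
        inp ((WithLp.equiv 2 (Fin d → ℝ)) u - (WithLp.equiv 2 (Fin d → ℝ)) u')
          (gradQ ((WithLp.equiv 2 (Fin d → ℝ)) u') βs) := by
      rw [inp_eq_inner', WithLp.equiv_symm_sub, Equiv.symm_apply_apply,
        Equiv.symm_apply_apply]
    have enorm : ‖u - u'‖ =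
        l2 ((WithLp.equiv 2 (Fin d → ℝ)) u - (WithLp.equiv 2 (Fin d → ℝ)) u') := by
      rw [l2_eq_norm', WithLp.equiv_symm_sub, Equiv.symm_apply_apply,
        Equiv.symm_apply_apply]
    rw [einn, enorm]
    exact H
  · intro u hu
    simp only [Equiv.apply_symm_apply] at hu ⊢
    have hu2 : l2 ((WithLp.equiv 2 (Fin d → ℝ)) u - βs) ≤ R := by
      rw [← hnorm, Equiv.symm_apply_apply]; exact hu
    have H := hlip _ hu2
    have e1 : ‖(WithLp.equiv 2 (Fin d → ℝ)).symm
          (gradQ ((WithLp.equiv 2 (Fin d → ℝ)) u) βs) -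
        (WithLp.equiv 2 (Fin d → ℝ)).symm
          (gradQ ((WithLp.equiv 2 (Fin d → ℝ)) u) ((WithLp.equiv 2 (Fin d → ℝ)) u))‖ =
        l2 (gradQ ((WithLp.equiv 2 (Fin d → ℝ)) u) βs -
          gradQ ((WithLp.equiv 2 (Fin d → ℝ)) u) ((WithLp.equiv 2 (Fin d → ℝ)) u)) :=
      hnorm _ _
    have e2 : ‖u - (WithLp.equiv 2 (Fin d → ℝ)).symm βs‖ =
        l2 ((WithLp.equiv 2 (Fin d → ℝ)) u - βs) := by
      rw [← hnorm, Equiv.symm_apply_apply]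
    rw [e1, e2]
    exact H
  · rw [hnorm]
    exact hβ
end

section
/- Let β̄, β, β* ∈ ℝ^d with β̄ ≠ 0 and β* ≠ 0, let S* = {j : β*_j ≠ 0} with |S*| ≤ s* and s* ≥ 1, and let s be an integer with s ≥ 2s*. Let Ŝ = supp(β, s) and I₁ = S* \ Ŝ. Define θ̄ = β̄/‖β̄‖₂, θ* = β*/‖β*‖₂, Δ = ⟨θ̄, θ*⟩, and ε̃ = 2‖β̄ − β‖_∞/‖β̄‖₂. Then ‖θ̄_{I₁}‖₂ ≤ √(s*/s)·√(1 − Δ²) + √s*·ε̃, where θ̄_{I₁} denotes the restriction of θ̄ to the coordinates in I₁. -/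
/-!
Let `T = Ŝ \ S*`. Every missed coordinate `j ∈ I₁` loses to every `i ∈ T` in the ranking by `|β|`,
so `|θ̄_j| ≤ min_T |θ̄| + ε̃`. The coordinates of `T` lie off the support of `θ*`, so by
Cauchy–Schwarz their `θ̄`-mass is at most `1 - Δ²`; and counting gives `|I₁| ≤ (s*/s) |T|`.
-/

open MeasureTheory ProbabilityTheory Real
open scoped ENNReal NNReal

open Finset

section FinsetSums

variable {ι : Type*}

theorem card_sdiff_le_div_mul_card_sdiff [DecidableEq ι] {A B : Finset ι} {n : ℕ}
    (hA : #A ≤ n) (hn : n ≤ #B) : (#(A \ B) : ℝ) ≤ n / #B * #(B \ A) := by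
  rcases (#B).eq_zero_or_pos with hB | hB
  · have : A = ∅ := card_eq_zero.1 (by omega)
    simp only [this, empty_sdiff, card_empty, Nat.cast_zero]
    positivity
  have hA' := card_sdiff_add_card_inter A B
  have hB' := card_sdiff_add_card_inter B A
  rw [inter_comm] at hB'
  have key : #(A \ B) * #B ≤ n * #(B \ A) := by
    nlinarith [Nat.mul_le_mul_left #(A ∩ B) hn]
  rw [div_mul_eq_mul_div, le_div_iff₀ (by exact_mod_cast hB)]
  exact_mod_cast key

theorem sum_sq_le_sum_sq_sub_sq_sum_mul_of_eq_zero [Fintype ι] [DecidableEq ι] (θ g : ι → ℝ)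
    (hg : ∑ j, g j ^ 2 ≤ 1) {T : Finset ι} (hT : ∀ j ∈ T, g j = 0) :
    ∑ j ∈ T, θ j ^ 2 ≤ ∑ j, θ j ^ 2 - (∑ j, θ j * g j) ^ 2 := by
  have hinner : ∑ j, θ j * g j = ∑ j ∈ Tᶜ, θ j * g j := by
    rw [← sum_add_sum_compl T, sum_eq_zero fun j hj => by simp [hT j hj], zero_add]
  have hcs : (∑ j ∈ Tᶜ, θ j * g j) ^ 2 ≤ ∑ j ∈ Tᶜ, θ j ^ 2 :=
    calc (∑ j ∈ Tᶜ, θ j * g j) ^ 2 ≤ (∑ j ∈ Tᶜ, θ j ^ 2) * ∑ j ∈ Tᶜ, g j ^ 2 :=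
          sum_mul_sq_le_sq_mul_sq _ _ _
      _ ≤ (∑ j ∈ Tᶜ, θ j ^ 2) * 1 :=
          mul_le_mul_of_nonneg_left ((sum_le_sum_of_subset_of_nonneg (subset_univ _)
            fun j _ _ => sq_nonneg _).trans hg) (sum_nonneg fun j _ => sq_nonneg _)
      _ = ∑ j ∈ Tᶜ, θ j ^ 2 := mul_one _
  rw [hinner, ← sum_add_sum_compl T fun j => θ j ^ 2]
  linarith

theorem sqrt_sum_sq_le_of_abs_le_add (θ : ι → ℝ) {I T : Finset ι} {r ε : ℝ} (hr : 0 ≤ r)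
    (hε : 0 ≤ ε) (hcard : (#I : ℝ) ≤ r * #T) (h : ∀ j ∈ I, ∀ i ∈ T, |θ j| ≤ |θ i| + ε) :
    √(∑ j ∈ I, θ j ^ 2) ≤ √(r * ∑ i ∈ T, θ i ^ 2) + √(#I : ℝ) * ε := by
  rcases I.eq_empty_or_nonempty with rfl | hI
  · simp only [sum_empty, Real.sqrt_zero, card_empty, Nat.cast_zero, zero_mul, add_zero]
    positivity
  have hT : T.Nonempty := by
    rw [← card_pos]
    have : (0 : ℝ) < r * #T := (Nat.cast_pos.2 hI.card_pos).trans_le hcard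
    exact_mod_cast pos_of_mul_pos_right this hr
  obtain ⟨i₀, hi₀, hmin⟩ := T.exists_min_image (fun i => |θ i|) hT
  set m := |θ i₀|
  have hI_le : ∑ j ∈ I, θ j ^ 2 ≤ #I * (m + ε) ^ 2 := by
    simpa using I.sum_le_card_nsmul (θ · ^ 2) _ fun j hj => by
      rw [← sq_abs (θ j)]; exact pow_le_pow_left₀ (abs_nonneg _) (h j hj i₀ hi₀) 2
  have hT_ge : #T * m ^ 2 ≤ ∑ i ∈ T, θ i ^ 2 := by
    simpa using T.card_nsmul_le_sum (θ · ^ 2) _ fun i hi => by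
      rw [← sq_abs (θ i)]; exact pow_le_pow_left₀ (abs_nonneg _) (hmin i hi) 2
  have hm : #I * m ^ 2 ≤ r * ∑ i ∈ T, θ i ^ 2 :=
    calc (#I : ℝ) * m ^ 2 ≤ r * #T * m ^ 2 := by gcongr
      _ ≤ r * ∑ i ∈ T, θ i ^ 2 := by rw [mul_assoc]; gcongr
  calc √(∑ j ∈ I, θ j ^ 2) ≤ √(#I * (m + ε) ^ 2) := Real.sqrt_le_sqrt hI_le
    _ = √(#I * m ^ 2) + √(#I : ℝ) * ε := by
        rw [Real.sqrt_mul (by positivity), Real.sqrt_mul (by positivity),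
          Real.sqrt_sq (by positivity), Real.sqrt_sq (abs_nonneg _)]
        ring
    _ ≤ √(r * ∑ i ∈ T, θ i ^ 2) + √(#I : ℝ) * ε := by gcongr

end FinsetSums

section Coordinates

variable {d : ℕ}

theorem l2_nonneg (v : Fin d → ℝ) : 0 ≤ l2 v :=
  Real.sqrt_nonneg _

theorem l2_trunc (v : Fin d → ℝ) (I : Finset (Fin d)) :
    l2 (trunc v I) = √(∑ j ∈ I, v j ^ 2) := by
  simp [l2, trunc, ite_pow, sum_ite_mem]

theorem sum_sq_inv_l2_smul_le_one (v : Fin d → ℝ) : ∑ j, ((l2 v)⁻¹ • v) j ^ 2 ≤ 1 := by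
  have hv : l2 v ^ 2 = ∑ j, v j ^ 2 := Real.sq_sqrt (sum_nonneg fun j _ => sq_nonneg _)
  calc ∑ j, ((l2 v)⁻¹ • v) j ^ 2 = ((l2 v)⁻¹ * l2 v) ^ 2 := by
        simp only [Pi.smul_apply, smul_eq_mul, mul_pow, ← mul_sum, hv]
    _ ≤ 1 := pow_le_one₀ (mul_nonneg (inv_nonneg.2 (l2_nonneg v)) (l2_nonneg v))
        (inv_mul_le_one_of_le₀ le_rfl (l2_nonneg v))

theorem abs_le_linf (v : Fin d → ℝ) (j : Fin d) : |v j| ≤ linf v :=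
  le_ciSup (f := fun j => |v j|) (Set.finite_range _).bddAbove j

theorem linf_nonneg (v : Fin d → ℝ) : 0 ≤ linf v :=
  Real.iSup_nonneg fun j => abs_nonneg (v j)

theorem abs_le_abs_add_two_linf_sub {u v : Fin d → ℝ} {i j : Fin d} (h : |v j| ≤ |v i|) :
    |u j| ≤ |u i| + 2 * linf (u - v) := by
  have hj := abs_le_linf (u - v) j
  have hi := abs_le_linf (u - v) i
  simp only [Pi.sub_apply] at hi hj
  linarith [abs_sub_abs_le_abs_sub (u j) (v j), abs_sub_abs_le_abs_sub (v i) (u i),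
    abs_sub_comm (v i) (u i)]

end Coordinates

open Classical in
theorem missed_support_mass_bound_general (d sstar s : ℕ) (βs βbar β : Fin d → ℝ)
    (S : Finset (Fin d))
    (hsupp : (Finset.univ.filter fun j => βs j ≠ 0).card ≤ sstar)
    (hs : 2 * sstar ≤ s)
    (hS : IsTopIdx β s S) :
    l2 (trunc ((l2 βbar)⁻¹ • βbar) ((Finset.univ.filter fun j => βs j ≠ 0) \ S)) ≤
      Real.sqrt ((sstar : ℝ) / s) *
          Real.sqrt (1 - inp ((l2 βbar)⁻¹ • βbar) ((l2 βs)⁻¹ • βs) ^ 2) +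
        Real.sqrt sstar * (2 * linf (βbar - β) / l2 βbar) := by
  set θ := (l2 βbar)⁻¹ • βbar
  set Sstar := univ.filter fun j => βs j ≠ 0
  have hgap : ∀ j ∈ Sstar \ S, ∀ i ∈ S \ Sstar,
      |θ j| ≤ |θ i| + 2 * linf (βbar - β) / l2 βbar := by
    intro j hj i hi
    have := abs_le_abs_add_two_linf_sub (u := βbar)
      (hS.2 i (mem_sdiff.1 hi).1 j (mem_sdiff.1 hj).2)
    simp only [θ, Pi.smul_apply, smul_eq_mul, abs_mul, abs_inv, abs_of_nonneg (l2_nonneg βbar)]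
    rw [div_eq_inv_mul, ← mul_add]
    exact mul_le_mul_of_nonneg_left this (inv_nonneg.2 (l2_nonneg βbar))
  have hcard := card_sdiff_le_div_mul_card_sdiff hsupp (by rw [hS.1]; omega)
  rw [hS.1] at hcard
  have hε : 0 ≤ 2 * linf (βbar - β) / l2 βbar :=
    div_nonneg (mul_nonneg zero_le_two (linf_nonneg _)) (l2_nonneg _)
  have hmissed : ∑ i ∈ S \ Sstar, θ i ^ 2 ≤ 1 - inp θ ((l2 βs)⁻¹ • βs) ^ 2 := by
    refine (sum_sq_le_sum_sq_sub_sq_sum_mul_of_eq_zero θ _ (sum_sq_inv_l2_smul_le_one βs)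
      fun i hi => ?_).trans (by unfold inp; linarith [sum_sq_inv_l2_smul_le_one βbar])
    have : βs i = 0 := by simpa [Sstar] using (mem_sdiff.1 hi).2
    simp [this]
  rw [l2_trunc]
  calc _ ≤ √(sstar / s * ∑ i ∈ S \ Sstar, θ i ^ 2) + √(#(Sstar \ S) : ℝ) * _ :=
        sqrt_sum_sq_le_of_abs_le_add θ (by positivity) hε hcard hgap
    _ ≤ _ := by
        rw [Real.sqrt_mul (by positivity)]
        gcongr
        exact (card_le_card sdiff_subset).trans hsupp

open Classical in
/-- bound on the mass of the normalized vector `θ̄ = β̄/‖β̄‖₂` on the true support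
coordinates missed by a top-`s` index set of `β`. -/
theorem missed_support_mass_bound (d sstar s : ℕ) (βs βbar β : Fin d → ℝ)
    (S : Finset (Fin d))
    (hbar : βbar ≠ 0) (hβs : βs ≠ 0)
    (hsupp : (Finset.univ.filter fun j => βs j ≠ 0).card ≤ sstar)
    (hsstar : 1 ≤ sstar) (hs : 2 * sstar ≤ s)
    (hS : IsTopIdx β s S) :
    l2 (trunc ((l2 βbar)⁻¹ • βbar) ((Finset.univ.filter fun j => βs j ≠ 0) \ S)) ≤
      Real.sqrt ((sstar : ℝ) / s) *
          Real.sqrt (1 - inp ((l2 βbar)⁻¹ • βbar) ((l2 βs)⁻¹ • βs) ^ 2) +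
        Real.sqrt sstar * (2 * linf (βbar - β) / l2 βbar) :=
  missed_support_mass_bound_general d sstar s βs βbar β S hsupp hs hS
end
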